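/- arXiv:1910.03341 — 10 statements merged into one kernel-verified Lean document; each statement's English description precedes it below -/
import Mathlib

section
/- For every n ≥ 1, the parity vertex chromatic number of the path P_n on n vertices equals ⌊log₂ n⌋ + 1. -/
open SimpleGraph

/-- A colouring `c` of the vertices of `G` with `k` colours is a *parity vertex colouring*
if every (nonempty) path in `G` contains an odd number of occurrences of some colour. -/
def IsParityColoring {V : Type} (G : SimpleGraph V) {k : ℕ} (c : V → Fin k) : Prop :=
  ∀ ⦃u v : V⦄ (p : G.Walk u v), p.IsPath → ∃ i : Fin k, Odd ((p.support.map c).count i)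

/-- The parity vertex chromatic number `χ_p(G)`: the least number of colours
in a parity vertex colouring of `G`. -/
noncomputable def parityChromaticNumber {V : Type} (G : SimpleGraph V) : ℕ :=
  sInf {k | ∃ c : V → Fin k, IsParityColoring G c}


lemma path_support_mem {n : ℕ} {u v : Fin n} (p : (pathGraph n).Walk u v) :
    p.IsPath → ∀ x : Fin n, x ∈ p.support ↔
      (min u.val v.val ≤ x.val ∧ x.val ≤ max u.val v.val) := by
  induction p with
  | nil =>
    intro _ x
    simp [Fin.ext_iff]
    omega
  | @cons a b w h q ih =>
    intro hp x
    rw [Walk.cons_isPath_iff] at hp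
    obtain ⟨hq, hu⟩ := hp
    have ihx := ih hq x
    have ihu := ih hq a
    rw [ihu] at hu
    have hadj := (pathGraph_adj).mp h
    rw [Walk.support_cons, List.mem_cons, ihx, Fin.ext_iff]
    omega

lemma count_support {n k : ℕ} {u v : Fin n} (p : (pathGraph n).Walk u v) (hp : p.IsPath)
    (c : Fin n → Fin k) (i : Fin k) :
    (p.support.map c).count i =
      (Finset.univ.filter (fun x : Fin n =>
        (min u.val v.val ≤ x.val ∧ x.val ≤ max u.val v.val) ∧ c x = i)).card := by
  classical
  set S : Finset (Fin n) := Finset.univ.filter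
    (fun x : Fin n => min u.val v.val ≤ x.val ∧ x.val ≤ max u.val v.val) with hS
  have hfin : p.support.toFinset = S := by
    ext y
    simp [hS, path_support_mem p hp y]
  have hperm : p.support.Perm S.toList :=
    List.perm_of_nodup_nodup_toFinset_eq hp.support_nodup S.nodup_toList
      (by rw [hfin, Finset.toList_toFinset])
  have h1 : (p.support.map c).count i = p.support.countP (fun x => c x == i) := by
    rw [List.count_eq_countP, List.countP_map]
    rfl
  rw [h1, hperm.countP_eq]
  have h2 : S.toList.countP (fun x => c x == i) = (S.filter (fun x => c x = i)).card := by
    have e : (fun x => c x == i) = (fun x => decide (c x = i)) := by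
      funext x; by_cases h : c x = i <;> simp [h]
    rw [e, ← Multiset.coe_countP, Finset.toList, Multiset.coe_toList,
      Multiset.countP_eq_card_filter]
    rfl
  rw [h2, Finset.filter_filter]

lemma exists_card_filter_padic_eq_one (s t : ℕ) (hs : 1 ≤ s) (hst : s ≤ t) :
    ∃ V ≤ Nat.log 2 t,
      ((Finset.Icc s t).filter (fun y => padicValNat 2 y = V)).card = 1 := by
  haveI : Fact (Nat.Prime 2) := ⟨Nat.prime_two⟩
  obtain ⟨m, hm, hmax⟩ := Finset.exists_max_image (Finset.Icc s t) (padicValNat 2)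
    ⟨s, by simp [hst]⟩
  set V := padicValNat 2 m with hV
  rw [Finset.mem_Icc] at hm
  have hm0 : m ≠ 0 := by omega
  refine ⟨V, ?_, ?_⟩
  · calc V ≤ Nat.log 2 m := padicValNat_le_nat_log m
      _ ≤ Nat.log 2 t := Nat.log_mono_right hm.2
  · rw [Finset.card_eq_one]
    refine ⟨m, ?_⟩
    ext y
    simp only [Finset.mem_filter, Finset.mem_Icc, Finset.mem_singleton]
    constructor
    · rintro ⟨hy, hyV⟩
      by_contra hne
      -- y ≠ m, both have valuation V
      have hy0 : y ≠ 0 := by omega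
      -- both are multiples of 2^V, not of 2^(V+1)
      have key : ∀ x y : ℕ, x ≠ 0 → y ≠ 0 → x < y → y ≤ t → s ≤ x →
          padicValNat 2 x = V → padicValNat 2 y = V → False := by
        intro x y hx0 hy0 hxy hyt hsx hxV hyV
        have hdx : 2 ^ V ∣ x := by
          rw [← hxV]; exact pow_padicValNat_dvd
        have hdy : 2 ^ V ∣ y := by
          rw [← hyV]; exact pow_padicValNat_dvd
        have hndx : ¬ 2 ^ (V + 1) ∣ x := by
          rw [padicValNat_dvd_iff_le hx0, hxV]; omega
        have hdz : 2 ^ (V + 1) ∣ x + 2 ^ V := by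
          obtain ⟨a, rfl⟩ := hdx
          have ha : ¬ 2 ∣ a := by
            rintro ⟨b, rfl⟩
            exact hndx ⟨b, by ring⟩
          obtain ⟨b, hb⟩ : 2 ∣ a + 1 := by omega
          exact ⟨b, by
            have : 2 ^ V * a + 2 ^ V = 2 ^ V * (a + 1) := by ring
            rw [this, hb, pow_succ]; ring⟩
        have hle : x + 2 ^ V ≤ y := by
          have : 2 ^ V ∣ y - x := Nat.dvd_sub hdy hdx
          have := Nat.le_of_dvd (by omega) this
          omega
        have hz0 : x + 2 ^ V ≠ 0 := by positivity
        have hmz := hmax (x + 2 ^ V) (Finset.mem_Icc.mpr ⟨by omega, by omega⟩)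
        have hge : V + 1 ≤ padicValNat 2 (x + 2 ^ V) := (padicValNat_dvd_iff_le hz0).mp hdz
        omega
      rcases lt_or_gt_of_ne hne with h | h
      · exact key y m hy0 hm0 h hm.2 hy.1 hyV rfl
      · exact key m y hm0 hy0 h hy.2 hm.1 rfl hyV
    · rintro rfl
      exact ⟨⟨hm.1, hm.2⟩, rfl⟩

lemma upper_bound (n : ℕ) (hn : 1 ≤ n) :
    ∃ c : Fin n → Fin (Nat.log 2 n + 1), IsParityColoring (pathGraph n) c := by
  set k := Nat.log 2 n + 1 with hk
  have hc : ∀ x : Fin n, padicValNat 2 (x.val + 1) < k := by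
    intro x
    have h1 := @padicValNat_le_nat_log 2 (x.val + 1)
    have h2 : Nat.log 2 (x.val + 1) ≤ Nat.log 2 n := Nat.log_mono_right (by omega)
    omega
  refine ⟨fun x => ⟨padicValNat 2 (x.val + 1), hc x⟩, ?_⟩
  intro u v p hp
  set A := min u.val v.val with hA
  set B := max u.val v.val with hB
  have hBn : B < n := by
    have := u.isLt; have := v.isLt; omega
  obtain ⟨V, hVle, hcard⟩ := exists_card_filter_padic_eq_one (A + 1) (B + 1)
    (by omega) (by omega)
  have hVk : V < k := by
    have : Nat.log 2 (B + 1) ≤ Nat.log 2 n := Nat.log_mono_right (by omega)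
    omega
  refine ⟨⟨V, hVk⟩, ?_⟩
  rw [count_support p hp]
  have : (Finset.univ.filter (fun x : Fin n =>
      (A ≤ x.val ∧ x.val ≤ B) ∧ (⟨padicValNat 2 (x.val + 1), hc x⟩ : Fin k) = ⟨V, hVk⟩)).card
      = ((Finset.Icc (A + 1) (B + 1)).filter (fun y => padicValNat 2 y = V)).card := by
    refine Finset.card_bij (fun x _ => x.val + 1) ?_ ?_ ?_
    · intro x hx
      simp only [Finset.mem_filter, Finset.mem_univ, true_and, Fin.mk.injEq] at hx
      simp only [Finset.mem_filter, Finset.mem_Icc]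
      omega
    · intro x hx y hy hxy
      exact Fin.ext (by omega)
    · intro y hy
      simp only [Finset.mem_filter, Finset.mem_Icc] at hy
      refine ⟨⟨y - 1, by omega⟩, ?_, by simp; omega⟩
      simp only [Finset.mem_filter, Finset.mem_univ, true_and, Fin.mk.injEq]
      have : y - 1 + 1 = y := by omega
      rw [this]
      omega
  rw [this, hcard]
  exact odd_one

lemma lower_bound {n k : ℕ} (c : Fin n → Fin k)
    (hc : IsParityColoring (pathGraph n) c) : n < 2 ^ k := by
  classical
  set f : Fin (n + 1) → (Fin k → ZMod 2) := fun j i =>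
    ((Finset.univ.filter (fun x : Fin n => x.val < j.val ∧ c x = i)).card : ZMod 2) with hf
  have aux : ∀ j₁ j₂ : Fin (n + 1), j₁.val < j₂.val → f j₁ ≠ f j₂ := by
    intro j₁ j₂ hlt
    have hj₂ : j₂.val ≤ n := by omega
    set a : Fin n := ⟨j₁.val, by omega⟩ with ha
    set b : Fin n := ⟨j₂.val - 1, by omega⟩ with hb
    obtain ⟨w⟩ := pathGraph_preconnected n a b
    obtain ⟨i, hodd⟩ := hc w.toPath.1 w.toPath.2
    rw [count_support _ w.toPath.2] at hodd
    have heq : (Finset.univ.filter (fun x : Fin n =>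
        (min a.val b.val ≤ x.val ∧ x.val ≤ max a.val b.val) ∧ c x = i))
        = (Finset.univ.filter (fun x : Fin n =>
          (j₁.val ≤ x.val ∧ x.val ≤ j₂.val - 1) ∧ c x = i)) := by
      refine Finset.filter_congr (fun x _ => ?_)
      have h1 : a.val = j₁.val := rfl
      have h2 : b.val = j₂.val - 1 := rfl
      constructor <;> rintro ⟨h3, h4⟩ <;> exact ⟨by omega, h4⟩
    rw [heq] at hodd
    set M := (Finset.univ.filter (fun x : Fin n =>
      (j₁.val ≤ x.val ∧ x.val ≤ j₂.val - 1) ∧ c x = i)) with hM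
    have hsplit : (Finset.univ.filter (fun x : Fin n => x.val < j₂.val ∧ c x = i))
        = (Finset.univ.filter (fun x : Fin n => x.val < j₁.val ∧ c x = i)) ∪ M := by
      ext x
      simp only [hM, Finset.mem_filter, Finset.mem_union, Finset.mem_univ, true_and]
      by_cases hcx : c x = i <;> simp [hcx] <;> omega
    have hdisj : Disjoint
        (Finset.univ.filter (fun x : Fin n => x.val < j₁.val ∧ c x = i)) M := by
      rw [Finset.disjoint_left]
      intro x hx1 hx2
      simp only [hM, Finset.mem_filter, Finset.mem_univ, true_and] at hx1 hx2
      omega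
    have hcards : (Finset.univ.filter (fun x : Fin n => x.val < j₂.val ∧ c x = i)).card
        = (Finset.univ.filter (fun x : Fin n => x.val < j₁.val ∧ c x = i)).card + M.card := by
      rw [hsplit, Finset.card_union_of_disjoint hdisj]
    intro hcontra
    have h1 : f j₁ i = f j₂ i := by rw [hcontra]
    have hMcast : (M.card : ZMod 2) = 1 := by
      rw [Nat.odd_iff] at hodd
      rw [← ZMod.natCast_mod, hodd]
      rfl
    have h2 : f j₂ i = f j₁ i + 1 := by
      simp only [hf]
      rw [hcards, Nat.cast_add, hMcast]
    rw [h2] at h1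
    have : (1 : ZMod 2) ≠ 0 := by decide
    exact this (left_eq_add.mp h1)
  have hinj : Function.Injective f := by
    intro j₁ j₂ h
    by_contra hne
    rcases Nat.lt_or_ge j₁.val j₂.val with hlt | hge
    · exact aux j₁ j₂ hlt h
    · have : j₂.val < j₁.val := by
        rcases Nat.lt_or_ge j₂.val j₁.val with h' | h'
        · exact h'
        · exact absurd (Fin.ext (by omega)) hne
      exact aux j₂ j₁ this h.symm
  have hcard := Fintype.card_le_of_injective f hinj
  simp only [Fintype.card_fin, Fintype.card_fun, ZMod.card] at hcard
  omega

/-- For every `n ≥ 1`, the parity vertex chromatic number of the path on `n` vertices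
equals `⌊log₂ n⌋ + 1`. -/
theorem parityChromatic_pathGraph (n : ℕ) (hn : 1 ≤ n) :
    parityChromaticNumber (SimpleGraph.pathGraph n) = Nat.log 2 n + 1 := by
  obtain ⟨c, hc⟩ := upper_bound n hn
  have hmem : Nat.log 2 n + 1 ∈
      {k | ∃ c : Fin n → Fin k, IsParityColoring (pathGraph n) c} := ⟨c, hc⟩
  refine le_antisymm (Nat.sInf_le hmem) (le_csInf ⟨_, hmem⟩ ?_)
  rintro k ⟨c', hc'⟩
  have h2 : n < 2 ^ k := lower_bound c' hc'
  have h3 : Nat.log 2 n < k := (Nat.log_lt_iff_lt_pow one_lt_two (by omega)).mpr h2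
  omega
end

section
/- For every n ≥ 3, the parity vertex chromatic number of the cycle C_n on n vertices equals ⌈log₂ n⌉ + 1. -/
open SimpleGraph

open Fin.CommRing Fin.NatCast

variable {n : ℕ} [NeZero n]

lemma fin_one_val (hn : 3 ≤ n) : (1 : Fin n).val = 1 :=
  Fin.val_one' n |>.trans (Nat.mod_eq_of_lt (by omega))

lemma cyc_adj_succ (hn : 3 ≤ n) (u : Fin n) : (cycleGraph n).Adj u (u + 1) := by
  rw [cycleGraph_adj']
  right
  have h1 : (u + 1 - u : Fin n) = 1 := by ring
  rw [h1, fin_one_val hn]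

def arc (hn : 3 ≤ n) : (u : Fin n) → (ℓ : ℕ) → (cycleGraph n).Walk u (u + (ℓ : Fin n))
  | u, 0 => Walk.nil.copy rfl (by simp)
  | u, ℓ+1 => (Walk.cons (cyc_adj_succ hn u) (arc hn (u+1) ℓ)).copy rfl
      (by push_cast; ring)

lemma arc_support (hn : 3 ≤ n) (u : Fin n) (ℓ : ℕ) :
    (arc hn u ℓ).support = (List.range (ℓ+1)).map (fun i : ℕ => u + (i : Fin n)) := by
  induction ℓ generalizing u with
  | zero =>
    rw [show (1:ℕ) = 0 + 1 from rfl, List.range_succ, List.range_zero]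
    simp [arc]
  | succ ℓ ih =>
    rw [arc, Walk.support_copy, Walk.support_cons, ih]
    conv_rhs => rw [List.range_succ_eq_map, List.map_cons, List.map_map]
    refine congrArg₂ _ (by simp) ?_
    apply List.map_congr_left
    intro i _
    simp only [Function.comp]
    push_cast
    ring

lemma arc_isPath (hn : 3 ≤ n) (u : Fin n) {ℓ : ℕ} (h : ℓ < n) : (arc hn u ℓ).IsPath := by
  rw [Walk.isPath_def, arc_support]
  apply List.Nodup.map_on _ List.nodup_range
  intro i hi j hj hij
  rw [List.mem_range] at hi hj
  have : (i : Fin n) = (j : Fin n) := by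
    have := congrArg (fun x => x - u) hij
    simpa using this
  have := congrArg Fin.val this
  rwa [Fin.val_natCast, Fin.val_natCast, Nat.mod_eq_of_lt (by omega),
    Nat.mod_eq_of_lt (by omega)] at this

variable {k : ℕ}

/-- prefix parity vector -/
def gvec (c : Fin n → Fin k) (a : ℕ) : Fin k → ZMod 2 :=
  fun i => (((List.range a).map (fun j : ℕ => c j)).count i : ZMod 2)

lemma gvec_succ (c : Fin n → Fin k) (a : ℕ) (i : Fin k) :
    gvec c (a+1) i = gvec c a i + if c a = i then 1 else 0 := by
  unfold gvec
  rw [List.range_succ, List.map_append, List.count_append]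
  push_cast
  simp [List.count_singleton]

lemma gvec_period (c : Fin n → Fin k) (a : ℕ) :
    gvec c (a + n) = gvec c a + gvec c n := by
  induction a with
  | zero =>
    funext i
    simp [gvec]
  | succ a ih =>
    funext i
    have h1 : a + 1 + n = (a + n) + 1 := by omega
    rw [h1, gvec_succ]
    have h2 : ((a + n : ℕ) : Fin n) = (a : Fin n) := by
      push_cast
      simp
    rw [h2, ih]
    simp only [Pi.add_apply, gvec_succ]
    ring

lemma gvec_arc_count (hn : 3 ≤ n) (c : Fin n → Fin k) (a L : ℕ) (hL : 1 ≤ L) (i : Fin k) :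
    (((arc hn (a : Fin n) (L-1)).support.map c).count i : ZMod 2)
      = gvec c (a + L) i + gvec c a i := by
  rw [arc_support]
  have hL1 : L - 1 + 1 = L := by omega
  rw [hL1, List.map_map]
  have : gvec c (a + L) i = gvec c a i +
      (((List.range L).map (fun j : ℕ => c ((a + j : ℕ)))).count i : ZMod 2) := by
    unfold gvec
    rw [List.range_add, List.map_append, List.count_append]
    push_cast
    rw [List.map_map]
    refine congrArg _ (congrArg _ (congrArg _ (List.map_congr_left ?_)))
    intro j _
    simp only [Function.comp_apply]
    push_cast
    rfl
  rw [this]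
  have : ((List.range L).map (c ∘ fun i : ℕ => (a : Fin n) + (i : Fin n)))
      = (List.range L).map (fun j : ℕ => c ((a + j : ℕ))) := by
    apply List.map_congr_left
    intro j _
    simp [Function.comp]
  rw [this]
  linear_combination -(CharTwo.add_self_eq_zero (gvec c a i))

lemma gvec_ne (hn : 3 ≤ n) {c : Fin n → Fin k} (hc : IsParityColoring (cycleGraph n) c)
    (a L : ℕ) (h1 : 1 ≤ L) (h2 : L ≤ n) : gvec c (a + L) ≠ gvec c a := by
  intro he
  obtain ⟨i, hi⟩ := hc (arc hn (a : Fin n) (L-1)) (arc_isPath hn _ (by omega))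
  have hcnt := gvec_arc_count hn c a L h1 i
  rw [he] at hcnt
  have hcast : ((((arc hn (a : Fin n) (L-1)).support.map c).count i : ℕ) : ZMod 2) = 1 := by
    obtain ⟨t, ht⟩ := hi
    rw [ht]
    push_cast
    have h2 : (2 : ZMod 2) = 0 := by decide
    linear_combination (t : ZMod 2) * h2
  rw [hcast, CharTwo.add_self_eq_zero] at hcnt
  exact one_ne_zero hcnt

lemma gvec_inj (hn : 3 ≤ n) {c : Fin n → Fin k} (hc : IsParityColoring (cycleGraph n) c)
    (a b : ℕ) (hab : a < b) (hb : b < a + 2 * n) : gvec c a ≠ gvec c b := by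
  intro he
  rcases le_or_gt (b - a) n with h | h
  · exact gvec_ne hn hc a (b - a) (by omega) h (by rw [show a + (b-a) = b by omega]; exact he.symm)
  · set y := b - n with hy
    have hby : b = y + n := by omega
    have e1 : gvec c b = gvec c y + gvec c n := by rw [hby, gvec_period]
    set L := a + n - y with hL
    have hL1 : 1 ≤ L := by omega
    have hL2 : L ≤ n := by omega
    apply gvec_ne hn hc y L hL1 hL2
    have : y + L = a + n := by omega
    rw [this, gvec_period, he, e1]
    funext j
    simp only [Pi.add_apply]
    linear_combination (CharTwo.add_self_eq_zero (gvec c n j))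

lemma lower_bound_s1 (hn : 3 ≤ n) {c : Fin n → Fin k} (hc : IsParityColoring (cycleGraph n) c) :
    Nat.clog 2 n + 1 ≤ k := by
  have hinj : Function.Injective (fun x : Fin (2 * n) => gvec c x.val) := by
    intro x y hxy
    by_contra hne
    rcases lt_or_gt_of_ne (fun h : x = y => hne h) with h | h
    · exact gvec_inj hn hc x.val y.val h (by omega) hxy
    · exact gvec_inj hn hc y.val x.val h (by omega) hxy.symm
  have hcard := Fintype.card_le_of_injective _ hinj
  rw [Fintype.card_fin] at hcard
  have h2 : Fintype.card (Fin k → ZMod 2) = 2 ^ k := by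
    rw [Fintype.card_fun]
    simp
  rw [h2] at hcard
  match k with
  | 0 => simp at hcard; omega
  | m + 1 =>
    have hnm : n ≤ 2 ^ m := by
      rw [pow_succ] at hcard
      omega
    have := (Nat.clog_le_iff_le_pow (by norm_num : 1 < 2)).mpr hnm
    omega

lemma fin_one_val' (hn : 3 ≤ n) : (1 : Fin n).val = 1 :=
  Fin.val_one' n |>.trans (Nat.mod_eq_of_lt (by omega))

lemma fin_one_ne_neg_one (hn : 3 ≤ n) : (1 : Fin n) ≠ -1 := by
  intro h
  have h2 : ((1 : Fin n) + 1).val = 0 := by nth_rewrite 1 [h]; rw [neg_add_cancel, Fin.val_zero]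
  rw [Fin.val_add, fin_one_val' hn, Nat.mod_eq_of_lt (by omega)] at h2
  omega

lemma cyc_adj_cases (hn : 3 ≤ n) {u w : Fin n} (h : (cycleGraph n).Adj u w) :
    w = u + 1 ∨ w = u + (-1) := by
  rw [cycleGraph_adj'] at h
  rcases h with h | h
  · right
    have : u - w = 1 := Fin.ext (by rw [h, fin_one_val' hn])
    rw [← this]; ring
  · left
    have : w - u = 1 := Fin.ext (by rw [h, fin_one_val' hn])
    rw [← this]; ring

lemma path_is_arc (hn : 3 ≤ n) {u v : Fin n} (p : (cycleGraph n).Walk u v) (hp : p.IsPath) :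
    ∃ d : Fin n, (d = 1 ∨ d = -1) ∧
      p.support = (List.range (p.length + 1)).map (fun i : ℕ => u + (i : Fin n) * d) := by
  induction p with
  | nil =>
    exact ⟨1, Or.inl rfl, by simp [List.range_succ]⟩
  | @cons u w v h q ih =>
    rw [Walk.cons_isPath_iff] at hp
    obtain ⟨d, hd, hsup⟩ := ih hp.1
    rcases cyc_adj_cases hn h with he | he
    · -- w = u + 1
      rcases Nat.eq_zero_or_pos q.length with h0 | h0
      · refine ⟨1, Or.inl rfl, ?_⟩
        have hs : q.support = [w] := by rw [hsup, h0]; simp [List.range_succ]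
        rw [Walk.support_cons, hs, Walk.length_cons, h0]
        simp [List.range_succ, he]
      · have hed : d = 1 := by
          rcases hd with rfl | rfl
          · rfl
          · exfalso
            apply hp.2
            rw [hsup]
            refine List.mem_map.mpr ⟨1, List.mem_range.mpr (by omega), ?_⟩
            rw [he]
            push_cast
            ring
        subst hed
        refine ⟨1, Or.inl rfl, ?_⟩
        rw [Walk.support_cons, hsup, Walk.length_cons]
        conv_rhs => rw [List.range_succ_eq_map, List.map_cons, List.map_map]
        refine congrArg₂ _ (by simp) ?_
        apply List.map_congr_left
        intro i _
        simp only [Function.comp]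
        rw [he]
        push_cast
        ring
    · -- w = u - 1
      rcases Nat.eq_zero_or_pos q.length with h0 | h0
      · refine ⟨-1, Or.inr rfl, ?_⟩
        have hs : q.support = [w] := by rw [hsup, h0]; simp [List.range_succ]
        rw [Walk.support_cons, hs, Walk.length_cons, h0]
        simp [List.range_succ, he]
      · have hed : d = -1 := by
          rcases hd with rfl | rfl
          · exfalso
            apply hp.2
            rw [hsup]
            refine List.mem_map.mpr ⟨1, List.mem_range.mpr (by omega), ?_⟩
            rw [he]
            push_cast
            ring
          · rfl
        subst hed
        refine ⟨-1, Or.inr rfl, ?_⟩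
        rw [Walk.support_cons, hsup, Walk.length_cons]
        conv_rhs => rw [List.range_succ_eq_map, List.map_cons, List.map_map]
        refine congrArg₂ _ (by simp) ?_
        apply List.map_congr_left
        intro i _
        simp only [Function.comp]
        rw [he]
        push_cast
        ring

lemma countP_range_card (p : ℕ → Bool) (N : ℕ) :
    (List.range N).countP p = ((Finset.range N).filter (fun i => p i)).card := by
  induction N with
  | zero => simp
  | succ N ih =>
    rw [List.range_succ, List.countP_append, Finset.range_add_one, Finset.filter_insert, ih]
    by_cases h : p N
    · rw [if_pos h, Finset.card_insert_of_notMem (by simp)]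
      simp [h]
    · rw [if_neg h]
      simp [h]

/-- In an interval of positive integers, some 2-adic valuation value is attained exactly once. -/
lemma exists_val_count_one (a N : ℕ) (ha : 1 ≤ a) (hN : 1 ≤ N) :
    ∃ M : ℕ, M = (Finset.range N).sup (fun i => padicValNat 2 (a + i)) ∧
      ((Finset.range N).filter (fun i => padicValNat 2 (a + i) = M)).card = 1 := by
  set f : ℕ → ℕ := fun i => padicValNat 2 (a + i) with hf
  set M := (Finset.range N).sup f with hM
  refine ⟨M, rfl, ?_⟩
  obtain ⟨i₀, hi₀, hMi₀⟩ := Finset.exists_mem_eq_sup (Finset.range N)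
    ⟨0, Finset.mem_range.mpr (by omega)⟩ f
  rw [Finset.card_eq_one]
  refine ⟨i₀, ?_⟩
  ext j
  simp only [Finset.mem_filter, Finset.mem_singleton, Finset.mem_range]
  constructor
  · rintro ⟨hjN, hjM⟩
    by_contra hne
    -- two distinct indices with max valuation; derive contradiction
    have key : ∀ x y : ℕ, x < y → padicValNat 2 x = M → padicValNat 2 y = M →
        1 ≤ x → ∃ z, x < z ∧ z < y ∧ 2 ^ (M+1) ∣ z := by
      intro x y hxy hx hy hx1
      have hx0 : x ≠ 0 := by omega
      have hy0 : y ≠ 0 := by omega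
      obtain ⟨q, hq⟩ : 2 ^ M ∣ x := hx ▸ pow_padicValNat_dvd
      obtain ⟨r, hr⟩ : 2 ^ M ∣ y := hy ▸ pow_padicValNat_dvd
      have hqodd : ¬ 2 ∣ q := by
        intro ⟨t, ht⟩
        have : 2 ^ (M+1) ∣ x := ⟨t, by rw [hq, ht]; ring⟩
        exact pow_succ_padicValNat_not_dvd hx0 (hx ▸ this)
      have hrodd : ¬ 2 ∣ r := by
        intro ⟨t, ht⟩
        have : 2 ^ (M+1) ∣ y := ⟨t, by rw [hr, ht]; ring⟩
        exact pow_succ_padicValNat_not_dvd hy0 (hy ▸ this)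
      have hp : 0 < 2 ^ M := Nat.pow_pos (by norm_num)
      have hqr : q < r := by
        by_contra h
        push_neg at h
        have := Nat.mul_le_mul_left (2 ^ M) h
        omega
      have hq1 : q + 1 < r := by
        rcases Nat.lt_or_ge (q+1) r with h | h
        · exact h
        · have : r = q + 1 := by omega
          subst this
          exact absurd ⟨(q+1)/2, by omega⟩ hrodd
      refine ⟨2 ^ M * (q + 1), ?_, ?_, ?_⟩
      · rw [hq]
        exact Nat.mul_lt_mul_of_le_of_lt (le_refl _) (by omega) (by omega)
      · rw [hr]
        exact Nat.mul_lt_mul_of_le_of_lt (le_refl _) hq1 (by omega)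
      · obtain ⟨t, ht⟩ : 2 ∣ q + 1 := ⟨(q+1)/2, by omega⟩
        exact ⟨t, by rw [ht, pow_succ]; ring⟩
    have contra : ∀ s t : ℕ, s < t → t < N → f s = M → f t = M → False := by
      intro s t hst htN hs ht
      obtain ⟨z, hz1, hz2, hz3⟩ := key (a + s) (a + t) (by omega) hs ht (by omega)
      have hz0 : z ≠ 0 := by omega
      have hvz : M + 1 ≤ padicValNat 2 z := (padicValNat_dvd_iff_le hz0).mp hz3
      have hzi : z = a + (z - a) := by omega
      have hmem : z - a ∈ Finset.range N := Finset.mem_range.mpr (by omega)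
      have hle : f (z - a) ≤ M := Finset.le_sup hmem
      rw [hf] at hle
      simp only at hle
      rw [← hzi] at hle
      omega
    rcases Nat.lt_or_ge j i₀ with h | h
    · exact contra j i₀ h (Finset.mem_range.mp hi₀) hjM hMi₀.symm
    · exact contra i₀ j (by omega) hjN hMi₀.symm hjM
  · rintro rfl
    exact ⟨Finset.mem_range.mp hi₀, hMi₀.symm⟩

lemma padic_le_log {x : ℕ} (hx : x ≠ 0) : padicValNat 2 x ≤ Nat.log 2 x :=
  (Nat.le_log_iff_pow_le one_lt_two hx).mpr
    (Nat.le_of_dvd (Nat.pos_of_ne_zero hx) pow_padicValNat_dvd)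

lemma clog_eq_log_pred (hn : 2 ≤ n) : Nat.clog 2 n = Nat.log 2 (n-1) + 1 := by
  apply le_antisymm
  · rw [Nat.clog_le_iff_le_pow one_lt_two]
    have := Nat.lt_pow_succ_log_self one_lt_two (n-1)
    omega
  · have h1 : 2 ^ Nat.log 2 (n-1) ≤ n - 1 := Nat.pow_log_le_self 2 (by omega)
    by_contra h
    push_neg at h
    have h2 : n ≤ 2 ^ Nat.log 2 (n-1) :=
      (Nat.clog_le_iff_le_pow one_lt_two).mp (by omega)
    omega

/-- The colouring witnessing the upper bound. -/
def col (n : ℕ) : Fin n → Fin (Nat.log 2 (n-1) + 2) := fun v =>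
  if hv : v.val = 0 then ⟨Nat.log 2 (n-1) + 1, by omega⟩
  else ⟨padicValNat 2 v.val, by
    have h1 := padic_le_log hv
    have h2 : Nat.log 2 v.val ≤ Nat.log 2 (n-1) := Nat.log_mono_right (by omega)
    omega⟩

lemma col_parity (hn : 3 ≤ n) : IsParityColoring (cycleGraph n) (col n) := by
  intro u v p hp
  by_cases h0 : (0 : Fin n) ∈ p.support
  · -- the special colour of vertex 0 appears exactly once
    refine ⟨⟨Nat.log 2 (n-1) + 1, by omega⟩, ?_⟩
    have hc : (p.support.map (col n)).count ⟨Nat.log 2 (n-1) + 1, by omega⟩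
        = p.support.count 0 := by
      rw [List.count_eq_countP, List.count_eq_countP, List.countP_map]
      apply List.countP_congr
      intro x _
      simp only [Function.comp_apply, beq_iff_eq]
      constructor
      · intro hx
        by_contra hxne
        have hx0 : x.val ≠ 0 := fun h => hxne (Fin.ext h)
        rw [col, dif_neg hx0] at hx
        have := congrArg Fin.val hx
        simp only at this
        have h1 := padic_le_log hx0
        have h2 : Nat.log 2 x.val ≤ Nat.log 2 (n-1) := Nat.log_mono_right (by omega)
        omega
      · rintro rfl
        simp [col]
    rw [hc, List.count_eq_one_of_mem hp.support_nodup h0]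
    exact odd_one
  · -- the path avoids 0; find the unique maximal 2-adic valuation
    obtain ⟨d, hd, hsup⟩ := path_is_arc hn p hp
    set N := p.length + 1 with hN
    have hN1 : 1 ≤ N := by omega
    -- get a representation of the support (up to permutation) as an increasing arc
    obtain ⟨w, hperm⟩ : ∃ w : Fin n,
        p.support.Perm ((List.range N).map (fun i : ℕ => w + (i : Fin n))) := by
      rcases hd with rfl | rfl
      · refine ⟨u, List.Perm.of_eq ?_⟩
        rw [hsup]
        apply List.map_congr_left
        intro i _
        ring
      · refine ⟨u - ((N-1 : ℕ) : Fin n), ?_⟩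
        refine (p.support.reverse_perm.symm).trans (List.Perm.of_eq ?_)
        rw [hsup, ← List.map_reverse]
        conv_lhs => rw [List.range_eq_range', List.reverse_range']
        rw [List.map_map]
        apply List.map_congr_left
        intro i hi
        rw [List.mem_range] at hi
        simp only [Function.comp_apply]
        have : ((0 + N - 1 - i : ℕ) : Fin n) = ((N - 1 : ℕ) : Fin n) - (i : Fin n) := by
          rw [Nat.zero_add, Nat.cast_sub (by omega)]
        rw [this]
        ring
    have hNn : N ≤ n := by
      have := hp.support_nodup.length_le_card
      rwa [Walk.length_support, Fintype.card_fin] at this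
    set a := w.val with ha
    have h0' : ∀ i : ℕ, i < N → w + (i : Fin n) ≠ 0 := by
      intro i hi hzero
      apply h0
      rw [hperm.mem_iff]
      exact List.mem_map.mpr ⟨i, List.mem_range.mpr hi, hzero⟩
    have ha1 : 1 ≤ a := by
      rcases Nat.eq_zero_or_pos a with h | h
      · refine absurd (Fin.ext ?_ : w = 0) (by simpa using h0' 0 (by omega))
        rw [Fin.val_zero]
        omega
      · omega
    have hkey : ∀ i : ℕ, i < N → a + i < n := by
      intro i hi
      by_contra h
      push_neg at h
      have hia : n - a < N := by omega
      apply h0' (n - a) hia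
      apply Fin.ext
      rw [Fin.val_add, Fin.val_natCast, Nat.mod_eq_of_lt (show n - a < n by omega),
        Fin.val_zero, show w.val + (n - a) = n by omega, Nat.mod_self]
    have hval : ∀ i : ℕ, i < N → (w + (i : Fin n)).val = a + i := by
      intro i hi
      rw [Fin.val_add, Fin.val_natCast, Nat.mod_eq_of_lt (show i < n by omega),
        Nat.mod_eq_of_lt (hkey i hi)]
    obtain ⟨M, hMdef, hMcard⟩ := exists_val_count_one a N ha1 hN1
    have hMK : M ≤ Nat.log 2 (n-1) := by
      obtain ⟨i₀, hi₀, hMi₀⟩ := Finset.exists_mem_eq_sup (Finset.range N)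
        ⟨0, Finset.mem_range.mpr (by omega)⟩ (fun i => padicValNat 2 (a + i))
      rw [Finset.mem_range] at hi₀
      rw [hMdef, hMi₀]
      calc padicValNat 2 (a + i₀) ≤ Nat.log 2 (a + i₀) := padic_le_log (by omega)
        _ ≤ Nat.log 2 (n-1) := Nat.log_mono_right (by have := hkey i₀ hi₀; omega)
    refine ⟨⟨M, by omega⟩, ?_⟩
    have hcnt : (p.support.map (col n)).count ⟨M, by omega⟩ = 1 := by
      rw [(hperm.map (col n)).count_eq, List.map_map, List.count_eq_countP, List.countP_map]
      rw [countP_range_card]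
      refine Eq.trans ?_ hMcard
      apply congrArg
      apply Finset.filter_congr
      intro i hi
      rw [Finset.mem_range] at hi
      have hne : (w + (i : Fin n)).val ≠ 0 := by
        intro h
        exact h0' i hi (Fin.ext (by simpa using h))
      simp only [Function.comp_apply, beq_iff_eq, col, dif_neg hne, hval i hi,
        Fin.mk.injEq, decide_eq_true_eq]
      rw [dif_neg (show ¬ (a + i) = 0 by omega), Fin.mk.injEq]
    rw [hcnt]
    exact odd_one

/-- For every `n ≥ 3`, the parity vertex chromatic number of the cycle on `n` vertices
equals `⌈log₂ n⌉ + 1`. -/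
theorem parityChromatic_cycleGraph (n : ℕ) (hn : 3 ≤ n) :
    parityChromaticNumber (SimpleGraph.cycleGraph n) = Nat.clog 2 n + 1 := by
  haveI : NeZero n := ⟨by omega⟩
  have hk : Nat.clog 2 n + 1 = Nat.log 2 (n-1) + 2 := by
    rw [clog_eq_log_pred (by omega)]
  have hmem : (Nat.log 2 (n-1) + 2) ∈
      {k | ∃ c : Fin n → Fin k, IsParityColoring (cycleGraph n) c} :=
    ⟨col n, col_parity hn⟩
  apply le_antisymm
  · rw [hk]
    exact Nat.sInf_le hmem
  · apply le_csInf ⟨_, hmem⟩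
    rintro k ⟨c, hc⟩
    exact lower_bound_s1 hn hc
end

section
/- If a cycle C_n (n ≥ 3) is coloured with k colours by a parity vertex colouring, then 2n − 1 ≤ 2^k − 1, and hence k ≥ ⌈log₂ n⌉ + 1. -/
open SimpleGraph

/-!
Walk around the cycle twice, reading the vertices as the sequence `j ↦ j mod n`, and take the
parity vectors of its `2n` prefixes. Two prefixes of lengths `a < b < 2n` differ by a window of
`b - a` consecutive vertices; if `b - a > n`, replace the window by the one from `b` to `a + 2n`,
which has the same parity vector since two full turns count every colour an even number of times.
A window of at most `n` consecutive vertices is a path, so its parity vector is nonzero. Hence the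
`2n` prefix parity vectors are distinct elements of `(ZMod 2)^k`, and `2n ≤ 2^k`.
-/

lemma Function.Periodic.map_range'_add {α : Type*} {s : ℕ → α} {n : ℕ}
    (hs : Function.Periodic s n) (a m : ℕ) :
    (List.range' (a + n) m).map s = (List.range' a m).map s := by
  refine List.ext_getElem (by simp) fun j _ _ => ?_
  simp only [List.getElem_map, List.getElem_range', one_mul, add_right_comm a n j]
  exact hs _

section ParityVector

variable {α : Type*} [DecidableEq α]

def parityVector (l : List α) : α → ZMod 2 := fun i => (l.count i : ZMod 2)

@[simp]
lemma parityVector_append (l₁ l₂ : List α) :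
    parityVector (l₁ ++ l₂) = parityVector l₁ + parityVector l₂ := by
  funext i
  simp [parityVector, List.count_append]

lemma parityVector_append_self (l : List α) : parityVector (l ++ l) = 0 := by
  rw [parityVector_append]
  funext i
  exact CharTwo.add_self_eq_zero (R := ZMod 2) _

lemma parityVector_ne_zero_iff {l : List α} : parityVector l ≠ 0 ↔ ∃ i, Odd (l.count i) := by
  simp [funext_iff, parityVector, ZMod.natCast_eq_zero_iff_even]

def prefixParity (s : ℕ → α) (m : ℕ) : α → ZMod 2 := parityVector ((List.range m).map s)

lemma prefixParity_add (s : ℕ → α) (a m : ℕ) :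
    prefixParity s (a + m) = prefixParity s a + parityVector ((List.range' a m).map s) := by
  simp only [prefixParity, List.range_eq_range', ← List.range'_append_1, List.map_append,
    parityVector_append, Nat.zero_add]

lemma Function.Periodic.prefixParity {s : ℕ → α} {n : ℕ} (hs : Function.Periodic s n) :
    Function.Periodic (prefixParity s) (2 * n) := fun a => by
  rw [prefixParity_add, two_mul, ← List.range'_append_1, List.map_append, hs.map_range'_add,
    parityVector_append_self, add_zero]

end ParityVector

lemma Function.Periodic.injOn_Iio {β : Type*} {P : ℕ → β} {p d : ℕ}
    (hP : Function.Periodic P p) (hpd : p ≤ 2 * d)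
    (hne : ∀ a b, a < b → b ≤ a + d → P a ≠ P b) :
    Set.InjOn P (Set.Iio p) := by
  suffices h : ∀ a b, a < b → b < p → P a ≠ P b by
    intro a ha b hb hab
    by_contra hab'
    rcases Nat.lt_or_gt_of_ne hab' with hlt | hlt
    · exact h a b hlt hb hab
    · exact h b a hlt ha hab.symm
  intro a b hab hbp
  by_cases hbd : b ≤ a + d
  · exact hne a b hab hbd
  · rw [← hP a]
    exact (hne b (a + p) (by omega) (by omega)).symm

lemma CharP.natCast_injOn_Ico (R : Type*) [AddGroupWithOne R] (p : ℕ) [CharP R p] (a : ℕ) :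
    (Set.Ico a (a + p)).InjOn ((↑) : ℕ → R) := by
  rintro x ⟨hax, hx⟩ y ⟨hay, hy⟩ hxy
  obtain ⟨x, rfl⟩ := Nat.exists_eq_add_of_le hax
  obtain ⟨y, rfl⟩ := Nat.exists_eq_add_of_le hay
  have := ((CharP.natCast_eq_natCast R p).1 hxy).add_left_cancel' a
  rw [this.eq_of_lt_of_lt (by omega) (by omega)]

open Fin.CommRing

namespace SimpleGraph

variable {V : Type*} {G : SimpleGraph V}

def Walk.ofSeq (f : ℕ → V) (hf : ∀ j, G.Adj (f j) (f (j + 1))) (a : ℕ) :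
    (m : ℕ) → G.Walk (f a) (f (a + m))
  | 0 => nil
  | m + 1 => (ofSeq f hf a m).concat (hf (a + m))

lemma Walk.support_ofSeq (f : ℕ → V) (hf : ∀ j, G.Adj (f j) (f (j + 1))) (a m : ℕ) :
    (ofSeq f hf a m).support = (List.range' a (m + 1)).map f := by
  induction m with
  | zero => simp [ofSeq]
  | succ m ih => rw [ofSeq, support_concat, ih, List.range'_concat (n := m + 1)]; simp

lemma Walk.isPath_ofSeq (f : ℕ → V) (hf : ∀ j, G.Adj (f j) (f (j + 1))) (a m : ℕ)
    (hinj : (Set.Icc a (a + m)).InjOn f) : (ofSeq f hf a m).IsPath := by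
  have hmem : ∀ x ∈ List.range' a (m + 1), x ∈ Set.Icc a (a + m) := fun x hx => by
    rw [List.mem_range'_1] at hx
    exact ⟨hx.1, by omega⟩
  rw [isPath_def, support_ofSeq]
  exact (List.nodup_range' (s := a)).map_on fun x hx y hy => hinj (hmem x hx) (hmem y hy)

lemma cycleGraph_adj_natCast_succ {n : ℕ} [NeZero n] (hn : 2 ≤ n) (j : ℕ) :
    (cycleGraph n).Adj (↑j : Fin n) (↑(j + 1) : Fin n) := by
  rw [cycleGraph_adj', Nat.cast_succ, add_sub_cancel_left, Fin.val_one', Nat.mod_eq_of_lt hn]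
  exact Or.inr rfl

end SimpleGraph

lemma IsParityColoring.parityVector_ne_zero {V : Type} {G : SimpleGraph V} {k : ℕ}
    {c : V → Fin k} (hc : IsParityColoring G c) {u v : V} {p : G.Walk u v} (hp : p.IsPath) :
    parityVector (p.support.map c) ≠ 0 :=
  parityVector_ne_zero_iff.2 (hc p hp)

lemma IsParityColoring.prefixParity_cycleGraph_ne {n k : ℕ} [NeZero n] (hn : 2 ≤ n)
    {c : Fin n → Fin k} (hc : IsParityColoring (cycleGraph n) c) {a b : ℕ} (hab : a < b)
    (hba : b ≤ a + n) : prefixParity (c ∘ (↑)) a ≠ prefixParity (c ∘ (↑)) b := by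
  obtain ⟨m, rfl⟩ : ∃ m, b = a + (m + 1) := ⟨b - a - 1, by omega⟩
  have hinj : (Set.Icc a (a + m)).InjOn ((↑) : ℕ → Fin n) :=
    (CharP.natCast_injOn_Ico (Fin n) n a).mono (Set.Icc_subset_Ico_right (by omega))
  have hwalk := hc.parityVector_ne_zero
    (Walk.isPath_ofSeq _ (cycleGraph_adj_natCast_succ hn) a m hinj)
  rw [Walk.support_ofSeq, List.map_map] at hwalk
  rw [prefixParity_add, Ne, left_eq_add]
  exact hwalk

/-- If the cycle `C_n` (`n ≥ 3`) is coloured with `k` colours by a parity vertex colouring,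
then `2n − 1 ≤ 2^k − 1`, and hence `k ≥ ⌈log₂ n⌉ + 1`. -/
theorem cycle_parityColoring_bound (n k : ℕ) (hn : 3 ≤ n)
    (c : Fin n → Fin k) (hc : IsParityColoring (SimpleGraph.cycleGraph n) c) :
    2 * n - 1 ≤ 2 ^ k - 1 ∧ Nat.clog 2 n + 1 ≤ k := by
  have : NeZero n := ⟨by omega⟩
  have hper : Function.Periodic (c ∘ ((↑) : ℕ → Fin n)) n := fun j => by simp
  have hinj : (Set.Iio (2 * n)).InjOn (prefixParity (c ∘ ((↑) : ℕ → Fin n))) :=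
    hper.prefixParity.injOn_Iio le_rfl fun a b hab hba =>
      hc.prefixParity_cycleGraph_ne (by omega) hab hba
  have hcard : 2 * n ≤ 2 ^ k := by
    have := Finset.card_le_card_of_injOn (s := Finset.range (2 * n)) (t := Finset.univ) _
      (fun _ _ => Finset.mem_univ _) (by simpa using hinj)
    rwa [Finset.card_range, Finset.card_univ, Fintype.card_fun, ZMod.card,
      Fintype.card_fin] at this
  obtain ⟨k, rfl⟩ : ∃ k', k = k' + 1 :=
    Nat.exists_eq_add_one.2 (Nat.pos_of_ne_zero (by rintro rfl; omega))
  refine ⟨by omega, ?_⟩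
  have := Nat.clog_le_of_le_pow (b := 2) (x := n) (y := k) (by rw [pow_succ] at hcard; omega)
  omega
end

section
/- The parity vertex chromatic number is not monotone with respect to graph minors: there exists a graph G and a minor H of G such that χ_p(H) > χ_p(G). -/
open SimpleGraph

/-- `H` is a minor of `G`: there are nonempty, pairwise disjoint, connected branch sets
in `G`, one for each vertex of `H`, with an edge of `G` between the branch sets of any
two adjacent vertices of `H`. -/
def IsMinorOf {W V : Type} (H : SimpleGraph W) (G : SimpleGraph V) : Prop :=
  ∃ φ : W → Set V,
    (∀ w, (φ w).Nonempty) ∧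
    (∀ w, (G.induce (φ w)).Connected) ∧
    (∀ w w', w ≠ w' → Disjoint (φ w) (φ w')) ∧
    (∀ w w', H.Adj w w' → ∃ u ∈ φ w, ∃ v ∈ φ w', G.Adj u v)

/-! ### Auxiliary machinery -/

namespace ParityAux

variable {V : Type} {G : SimpleGraph V}

/-- From a list whose consecutive elements are adjacent, produce a walk with that support. -/
lemma walk_of_chain : ∀ (v : V) (l : List V), List.Chain G.Adj v l →
    ∃ (w : V) (p : G.Walk v w), p.support = v :: l := by
  intro v l
  induction l generalizing v with
  | nil => exact fun _ => ⟨v, Walk.nil, rfl⟩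
  | cons b t ih =>
    intro h
    replace h := List.isChain_cons_cons.mp h
    obtain ⟨w, p, hs⟩ := ih b h.2
    exact ⟨w, Walk.cons h.1 p, by simp [hs]⟩

/-- A Boolean chain check. -/
def chainB {α : Type} (adj : α → α → Bool) : α → List α → Bool
  | _, [] => true
  | a, b :: t => adj a b && chainB adj b t

lemma chain_of_chainB {α : Type} (adj : α → α → Bool) :
    ∀ (a : α) (l : List α), chainB adj a l = true → List.Chain (fun x y => adj x y = true) a l := by
  intro a l
  induction l generalizing a with
  | nil => intro _; exact List.Chain.nil
  | cons b t ih =>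
    intro h
    rw [chainB, Bool.and_eq_true] at h
    exact List.Chain.cons h.1 (ih b h.2)

/-- All lists extending the single vertex `v` into a path (avoiding `vis`), with fuel `f`. -/
def exts [DecidableEq V] (R : V → V → Bool) (verts : List V) : ℕ → V → List V → List (List V)
  | 0, v, _ => [[v]]
  | f + 1, v, vis =>
      [v] :: ((verts.filter (fun w => R v w && !(decide (w ∈ vis)))).flatMap
        (fun w => (exts R verts f w (v :: vis)).map (fun l => v :: l)))

def allPaths [DecidableEq V] (R : V → V → Bool) (verts : List V) (n : ℕ) : List (List V) :=
  verts.flatMap (fun v => exts R verts n v [])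

lemma mem_exts [DecidableEq V] (R : V → V → Bool) (verts : List V) :
    ∀ (l : List V) (f : ℕ) (v : V) (vis : List V),
      List.Chain (fun a b => R a b = true) v l → (v :: l).Nodup →
      (∀ x ∈ vis, x ∉ v :: l) → l.length ≤ f → (∀ x ∈ l, x ∈ verts) →
      (v :: l) ∈ exts R verts f v vis := by
  intro l
  induction l with
  | nil =>
    intro f v vis _ _ _ _ _
    cases f with
    | zero => simp [exts]
    | succ f => simp [exts]
  | cons b t ih =>
    intro f v vis hchain hnodup hvis hlen hmem
    replace hchain := List.isChain_cons_cons.mp hchain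
    cases f with
    | zero => simp at hlen
    | succ f =>
      rw [exts]
      refine List.mem_cons_of_mem _ ?_
      rw [List.mem_flatMap]
      refine ⟨b, ?_, ?_⟩
      · rw [List.mem_filter]
        refine ⟨hmem b (by simp), ?_⟩
        have hbv : b ∉ (v :: vis) := by
          rw [List.mem_cons]
          rintro (rfl | hb)
          · exact (List.nodup_cons.mp hnodup).1 (by simp)
          · exact hvis b hb (by simp)
        have hbvis : b ∉ vis := fun hb => hbv (List.mem_cons_of_mem _ hb)
        simp [hchain.1, hbvis]
      · rw [List.mem_map]
        refine ⟨b :: t, ?_, rfl⟩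
        apply ih
        · exact hchain.2
        · exact (List.nodup_cons.mp hnodup).2
        · intro x hx
          rcases List.mem_cons.mp hx with rfl | hx'
          · exact fun h => (List.nodup_cons.mp hnodup).1 h
          · intro h
            exact hvis x hx' (List.mem_cons_of_mem _ h)
        · simpa [Nat.succ_le_succ_iff] using hlen
        · exact fun x hx => hmem x (List.mem_cons_of_mem _ hx)

lemma support_mem_allPaths [DecidableEq V] [Fintype V]
    (R : V → V → Bool) (hR : ∀ a b, R a b = true ↔ G.Adj a b)
    {u v : V} (p : G.Walk u v) (hp : p.IsPath)
    (verts : List V) (hverts : ∀ x : V, x ∈ verts) :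
    p.support ∈ allPaths R verts (Fintype.card V) := by
  have hsup : p.support = u :: p.support.tail := p.support_eq_cons
  have hchain' : List.Chain' G.Adj p.support := p.isChain_adj_support
  rw [hsup] at hchain'
  have hchain : List.Chain (fun a b => R a b = true) u p.support.tail := by
    refine List.Chain.imp ?_ hchain'
    intro a b hab; exact (hR a b).mpr hab
  have hnodup : (u :: p.support.tail).Nodup := by
    rw [← hsup]; exact hp.support_nodup
  have hlen : p.support.tail.length ≤ Fintype.card V := by
    have h1 : (u :: p.support.tail).length ≤ Fintype.card V := by
      rw [← hsup]; exact hp.support_nodup.length_le_card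
    simpa using Nat.le_of_succ_le h1
  rw [allPaths, List.mem_flatMap]
  refine ⟨u, hverts u, ?_⟩
  rw [hsup]
  exact mem_exts _ _ _ _ _ _ hchain hnodup (by simp) hlen (fun x _ => hverts x)

lemma isParity_of_allPaths [DecidableEq V] [Fintype V]
    {k : ℕ} (c : V → Fin k)
    (R : V → V → Bool) (hR : ∀ a b, R a b = true ↔ G.Adj a b)
    (verts : List V) (hverts : ∀ x : V, x ∈ verts)
    (hck : ∀ l ∈ allPaths R verts (Fintype.card V),
      ∃ i : Fin k, Odd ((l.map c).count i)) :
    IsParityColoring G c :=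
  fun _ _ p hp => hck p.support (support_mem_allPaths R hR p hp verts hverts)

end ParityAux

/-! ### The concrete graphs: `Gex` is a tree on 11 vertices with `χ_p = 3`, and `Hex`,
obtained from `Gex` by contracting the edge `0-1`, has `χ_p = 4`. -/

def gEdges : List (Fin 11 × Fin 11) :=
  [(0,1),(0,2),(0,3),(1,4),(2,5),(3,6),(4,7),(4,8),(7,9),(8,10)]

def hEdges : List (Fin 10 × Fin 10) :=
  [(0,1),(0,2),(0,3),(1,4),(2,5),(3,6),(3,7),(6,8),(7,9)]

def gadj (u v : Fin 11) : Bool := gEdges.contains (u, v) || gEdges.contains (v, u)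

def hadj (u v : Fin 10) : Bool := hEdges.contains (u, v) || hEdges.contains (v, u)

lemma gsymm : ∀ u v : Fin 11, gadj u v = true → gadj v u = true := by decide
lemma gloop : ∀ u : Fin 11, ¬ gadj u u = true := by decide
lemma hsymm : ∀ u v : Fin 10, hadj u v = true → hadj v u = true := by decide
lemma hloop : ∀ u : Fin 10, ¬ hadj u u = true := by decide

def Gex : SimpleGraph (Fin 11) where
  Adj u v := gadj u v = true
  symm := ⟨fun u v h => gsymm u v h⟩
  loopless := ⟨fun u h => gloop u h⟩

def Hex : SimpleGraph (Fin 10) where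
  Adj u v := hadj u v = true
  symm := ⟨fun u v h => hsymm u v h⟩
  loopless := ⟨fun u h => hloop u h⟩

instance : DecidableRel Gex.Adj := fun u v => inferInstanceAs (Decidable (gadj u v = true))
instance : DecidableRel Hex.Adj := fun u v => inferInstanceAs (Decidable (hadj u v = true))

/-- An explicit parity 3-colouring of `Gex`. -/
def cG : Fin 11 → Fin 3 := ![0, 1, 1, 1, 2, 2, 2, 1, 1, 0, 0]

set_option maxRecDepth 40000 in
lemma cG_check : ∀ l ∈ ParityAux.allPaths gadj (List.finRange 11) (Fintype.card (Fin 11)),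
    ∃ i : Fin 3, Odd ((l.map cG).count i) := by decide

lemma cG_parity : IsParityColoring Gex cG :=
  ParityAux.isParity_of_allPaths cG gadj (fun _ _ => Iff.rfl)
    (List.finRange 11) (fun x => List.mem_finRange x) cG_check

/-! ### Lower bound machinery for `Hex` -/

/-- All (unoriented) paths of the tree `Hex`, grouped by their maximal vertex. -/
def hGroups : List (List (List (Fin 10))) :=
  [[[0]],
   [[1], [0, 1]],
   [[2], [0, 2], [1, 0, 2]],
   [[1, 0, 3], [2, 0, 3], [3], [0, 3]],
   [[3, 0, 1, 4], [2, 0, 1, 4], [4], [0, 1, 4], [1, 4]],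
   [[5], [2, 5], [3, 0, 2, 5], [4, 1, 0, 2, 5], [1, 0, 2, 5], [0, 2, 5]],
   [[0, 3, 6], [3, 6], [5, 2, 0, 3, 6], [2, 0, 3, 6], [4, 1, 0, 3, 6], [6], [1, 0, 3, 6]],
   [[3, 7], [5, 2, 0, 3, 7], [2, 0, 3, 7], [4, 1, 0, 3, 7], [7], [6, 3, 7], [1, 0, 3, 7], [0, 3, 7]],
   [[1, 0, 3, 6, 8], [8], [5, 2, 0, 3, 6, 8], [6, 8], [0, 3, 6, 8], [2, 0, 3, 6, 8], [4, 1, 0, 3, 6, 8], [7, 3, 6, 8], [3, 6, 8]],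
   [[6, 3, 7, 9], [3, 7, 9], [1, 0, 3, 7, 9], [5, 2, 0, 3, 7, 9], [0, 3, 7, 9], [7, 9], [2, 0, 3, 7, 9], [9], [8, 6, 3, 7, 9], [4, 1, 0, 3, 7, 9]]]

def oddCheck (cols : List (Fin 3)) (l : List (Fin 10)) : Bool :=
  (List.finRange 3).any fun i => ((l.map (fun v => cols.getD v.val 0)).count i) % 2 == 1

/-- Backtracking search: returns `true` iff no assignment of colours to the remaining
vertices passes all the parity checks of the corresponding groups. -/
def searchB : List (List (List (Fin 10))) → List (Fin 3) → Bool
  | [], _ => false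
  | g :: gs, cols =>
      (List.finRange 3).all fun cc =>
        !(g.all fun l => oddCheck (cols ++ [cc]) l) || searchB gs (cols ++ [cc])

lemma hGroups_valid : ∀ j : Fin 10, ∀ l ∈ hGroups.getD j.val [],
    l ≠ [] ∧ ParityAux.chainB hadj l.headI l.tail = true ∧ l.Nodup ∧
      ∀ v ∈ l, v.val ≤ j.val := by decide

set_option maxRecDepth 10000 in
lemma searchB_true : searchB hGroups [] = true := by decide

/-- Prefix colour lists of a colouring. -/
def colsOf (c : Fin 10 → Fin 3) (j : ℕ) : List (Fin 3) :=
  (List.range j).map (fun n => if h : n < 10 then c ⟨n, h⟩ else 0)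

lemma colsOf_getD (c : Fin 10 → Fin 3) (j : ℕ) (v : Fin 10) (hv : v.val < j) :
    (colsOf c j).getD v.val 0 = c v := by
  have hlen : (colsOf c j).length = j := by simp [colsOf]
  rw [List.getD_eq_getElem _ _ (by omega)]
  simp only [colsOf, List.getElem_map, List.getElem_range]
  rw [dif_pos v.isLt]

lemma searchB_false (c : Fin 10 → Fin 3) (hc : IsParityColoring Hex c) :
    ∀ (gs : List (List (List (Fin 10)))) (j : ℕ),
      j + gs.length = 10 → gs = hGroups.drop j → searchB gs (colsOf c j) = false := by
  intro gs
  induction gs with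
  | nil => intro j _ _; rfl
  | cons g t ih =>
    intro j hlen hdrop
    have hj : j < 10 := by simp at hlen; omega
    have hgetD : hGroups.getD j [] = g := by
      have hglen : hGroups.length = 10 := rfl
      have h1 : hGroups[j + 0]? = some g := by
        rw [← List.getElem?_drop, ← hdrop]
        simp
      rw [Nat.add_zero] at h1
      rw [List.getD_eq_getElem?_getD, h1]
      rfl
    have hdropsucc : hGroups.drop (j + 1) = t := by
      have h1 : hGroups.drop (j + 1) = (hGroups.drop j).drop 1 := by
        rw [List.drop_drop, Nat.add_comm]
      rw [h1, ← hdrop, List.drop_one, List.tail_cons]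
    set cc := c ⟨j, hj⟩ with hcc
    have hcols : colsOf c j ++ [cc] = colsOf c (j + 1) := by
      simp [colsOf, List.range_succ, hj, hcc]
    -- every path in `g` passes the parity check under the extended colour list
    have hgall : (g.all fun l => oddCheck (colsOf c j ++ [cc]) l) = true := by
      rw [List.all_eq_true]
      intro l hl
      obtain ⟨hne, hchainB, hnodup, hbound⟩ :=
        hGroups_valid ⟨j, hj⟩ l (by rwa [hgetD])
      obtain ⟨a, l', rfl⟩ := List.exists_cons_of_ne_nil hne
      have hchain : List.Chain Hex.Adj a l' :=
        ParityAux.chain_of_chainB hadj a l' hchainB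
      obtain ⟨w, p, hsup⟩ := ParityAux.walk_of_chain a l' hchain
      have hpath : p.IsPath := by
        rw [SimpleGraph.Walk.isPath_def, hsup]; exact hnodup
      obtain ⟨i, hi⟩ := hc p hpath
      rw [hsup] at hi
      have hmapeq : (a :: l').map (fun v => (colsOf c j ++ [cc]).getD v.val 0) =
          (a :: l').map c := by
        apply List.map_congr_left
        intro v hv
        rw [hcols]
        exact colsOf_getD c (j + 1) v (Nat.lt_succ_of_le (hbound v hv))
      rw [oddCheck, List.any_eq_true]
      refine ⟨i, List.mem_finRange i, ?_⟩
      rw [hmapeq, beq_iff_eq, ← Nat.odd_iff]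
      exact hi
    have hrec : searchB t (colsOf c j ++ [cc]) = false := by
      rw [hcols]
      exact ih (j + 1) (by simp at hlen ⊢; omega) hdropsucc.symm
    -- hence the branch `cc` of the `all` fails
    by_contra hne
    rw [Bool.not_eq_false, searchB, List.all_eq_true] at hne
    have := hne cc (List.mem_finRange cc)
    rw [hgall, hrec] at this
    simp at this

/-- No parity 3-colouring of `Hex` exists. -/
lemma Hex_no_three_coloring (c : Fin 10 → Fin 3) (hc : IsParityColoring Hex c) : False := by
  have h0 := searchB_false c hc hGroups 0 rfl rfl
  rw [show colsOf c 0 = [] from rfl, searchB_true] at h0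
  exact Bool.noConfusion h0

/-- Any parity colouring of `Hex` uses at least 4 colours. -/
lemma Hex_lower (k : ℕ) (c : Fin 10 → Fin k) (hc : IsParityColoring Hex c) : 4 ≤ k := by
  by_contra hk
  push_neg at hk
  have hk3 : k ≤ 3 := by omega
  have hc' : IsParityColoring Hex (fun v => Fin.castLE hk3 (c v)) := by
    intro u v p hp
    obtain ⟨i, hi⟩ := hc p hp
    refine ⟨Fin.castLE hk3 i, ?_⟩
    have : p.support.map (fun v => Fin.castLE hk3 (c v)) =
        (p.support.map c).map (Fin.castLE hk3) := by rw [List.map_map]; rfl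
    rw [this, List.count_map_of_injective _ _ (Fin.castLE_injective hk3)]
    exact hi
  exact Hex_no_three_coloring _ hc'

/-- An injective colouring is a parity colouring. -/
lemma parity_of_injective {V : Type} [DecidableEq V] {G : SimpleGraph V} {k : ℕ}
    (c : V → Fin k) (hinj : Function.Injective c) : IsParityColoring G c := by
  intro u v p hp
  refine ⟨c u, ?_⟩
  rw [List.count_map_of_injective _ _ hinj,
    List.count_eq_one_of_mem hp.support_nodup p.start_mem_support]
  exact odd_one

/-! ### Connectivity helpers -/

lemma induce_connected_singleton {V : Type} (G : SimpleGraph V) (u : V) :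
    (G.induce ({u} : Set V)).Connected := by
  constructor
  · rintro ⟨a, ha⟩ ⟨b, hb⟩
    simp only [Set.mem_singleton_iff] at ha hb
    subst ha; subst hb
    exact SimpleGraph.Reachable.refl _

lemma induce_connected_pair {V : Type} (G : SimpleGraph V) (u v : V) (h : G.Adj u v) :
    (G.induce ({u, v} : Set V)).Connected := by
  have hadj : (G.induce ({u, v} : Set V)).Adj ⟨u, by simp⟩ ⟨v, by simp⟩ := by
    simpa using h
  constructor
  · rintro ⟨a, ha⟩ ⟨b, hb⟩
    simp only [Set.mem_insert_iff, Set.mem_singleton_iff] at ha hb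
    rcases ha with rfl | rfl <;> rcases hb with rfl | rfl
    · exact SimpleGraph.Reachable.refl _
    · exact hadj.reachable
    · exact hadj.symm.reachable
    · exact SimpleGraph.Reachable.refl _

/-! ### The minor structure -/

/-- Branch sets: vertex `0` of `Hex` corresponds to `{0, 1}` in `Gex` (the contracted edge),
and vertex `j > 0` corresponds to `{j + 1}`. -/
def Fex (j : Fin 10) : Finset (Fin 11) :=
  if j = 0 then {0, 1} else {⟨j.val + 1, by omega⟩}

def φex (j : Fin 10) : Set (Fin 11) := ↑(Fex j)

lemma Hex_minor_Gex : IsMinorOf Hex Gex := by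
  refine ⟨φex, ?_, ?_, ?_, ?_⟩
  · intro w
    rw [φex, Finset.coe_nonempty]
    revert w; decide
  · intro w
    by_cases h : w = 0
    · have : φex w = ({0, 1} : Set (Fin 11)) := by
        rw [φex, Fex, if_pos h]
        simp
      rw [this]
      exact induce_connected_pair Gex 0 1 (by decide)
    · have : φex w = ({(⟨w.val + 1, by omega⟩ : Fin 11)} : Set (Fin 11)) := by
        rw [φex, Fex, if_neg h]
        simp
      rw [this]
      exact induce_connected_singleton Gex _
  · intro w w' hww
    have key : ∀ w w' : Fin 10, w ≠ w' → ∀ x : Fin 11, x ∈ Fex w → x ∈ Fex w' → False := by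
      decide
    rw [φex, φex, Finset.disjoint_coe, Finset.disjoint_left]
    intro x hx hx'
    exact key w w' hww x hx hx'
  · have key : ∀ w w' : Fin 10, Hex.Adj w w' →
        ∃ u ∈ Fex w, ∃ v ∈ Fex w', Gex.Adj u v := by decide
    intro w w' h
    obtain ⟨u, hu, v, hv, hadj⟩ := key w w' h
    exact ⟨u, Finset.mem_coe.mpr hu, v, Finset.mem_coe.mpr hv, hadj⟩

/-! ### Main theorem -/

/-- The parity vertex chromatic number is not monotone with respect to graph minors:
there is a graph `G` with a minor `H` such that `χ_p(H) > χ_p(G)`. -/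
theorem parityChromatic_not_minor_monotone :
    ∃ (n m : ℕ) (G : SimpleGraph (Fin n)) (H : SimpleGraph (Fin m)),
      IsMinorOf H G ∧ parityChromaticNumber G < parityChromaticNumber H := by
  refine ⟨11, 10, Gex, Hex, Hex_minor_Gex, ?_⟩
  have hG : parityChromaticNumber Gex ≤ 3 := Nat.sInf_le ⟨cG, cG_parity⟩
  have hHne : (10 : ℕ) ∈ {k | ∃ c : Fin 10 → Fin k, IsParityColoring Hex c} :=
    ⟨id, parity_of_injective id Function.injective_id⟩
  have hH : 4 ≤ parityChromaticNumber Hex := by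
    have hmem := Nat.sInf_mem (s := {k | ∃ c : Fin 10 → Fin k, IsParityColoring Hex c}) ⟨10, hHne⟩
    obtain ⟨c, hc⟩ := hmem
    exact Hex_lower _ c hc
  omega
end

section
/- In any safflower F rooted at r: if C₁ and C₂ are paths from r to nicely coloured vertices e₁, e₂ of F respectively, and v is the last common vertex of C₁ and C₂, then at least one of e₁, e₂ has the same colour as v. -/
open SimpleGraph

/-- A rooted tree given by a parent function: the root is its own parent and every
vertex reaches the root by iterating the parent map. -/
structure ParentTree (V : Type) where
  root : V
  parent : V → V
  parent_root : parent root = root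
  reaches : ∀ v, ∃ m, parent^[m] v = root

namespace ParentTree

variable {V : Type} (T : ParentTree V)

/-- The underlying (simple) graph of a rooted tree. -/
def graph : SimpleGraph V :=
  SimpleGraph.fromRel (fun u v => T.parent u = v)

/-- The children (sons) of a vertex. -/
def children (v : V) : Set V := {u | T.parent u = v ∧ u ≠ v}

/-- A vertex with no sons. -/
def IsLeaf (v : V) : Prop := T.children v = ∅

/-- A branched vertex: one having at least two sons. -/
def IsBranched (v : V) : Prop := ∃ u ∈ T.children v, ∃ w ∈ T.children v, u ≠ w

/-- A binary tree: every vertex has at most two sons. -/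
def IsBinary : Prop := ∀ v, (T.children v).ncard ≤ 2

/-- The depth of a vertex (the root has depth `0`). -/
noncomputable def depth (v : V) : ℕ := sInf {m | T.parent^[m] v = T.root}

/-- The tree has at most `l` layers (every vertex has depth `< l`). -/
def LayersLE (l : ℕ) : Prop := ∀ v, T.depth v + 1 ≤ l

/-- The descendants of `v` (including `v` itself). -/
def Desc (v : V) : Set V := {u | ∃ m, T.parent^[m] u = v}

/-- `S` is (the vertex set of) a compatible subtree of `T` with top vertex `r`:
it contains `r`, and every other vertex of `S` has its parent in `S`
(so `S` is connected and `r` is its vertex closest to the root of `T`). -/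
def IsSubtreeWithTop (S : Set V) (r : V) : Prop :=
  r ∈ S ∧ ∀ v ∈ S, v ≠ r → T.parent v ∈ S ∧ v ≠ T.root

/-- `v` is a leaf of the subtree on vertex set `S`. -/
def SLeaf (S : Set V) (v : V) : Prop :=
  v ∈ S ∧ ∀ u ∈ S, T.parent u = v → u = v

/-- `v` is a branched vertex of the subtree on vertex set `S`. -/
def SBranched (S : Set V) (v : V) : Prop :=
  v ∈ S ∧ ∃ u ∈ S, ∃ w ∈ S, u ≠ w ∧ u ≠ v ∧ w ≠ v ∧ T.parent u = v ∧ T.parent w = v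

/-- The subtree on `S` with top `r` is nicely coloured with nice colour `a` under the
colouring `c`: its root, all its leaves and all its branched vertices get colour `a`. -/
def IsNicelySubtree {k : ℕ} (c : V → Fin k) (a : Fin k) (S : Set V) (r : V) : Prop :=
  T.IsSubtreeWithTop S r ∧ c r = a ∧
    ∀ v, (T.SLeaf S v ∨ T.SBranched S v) → c v = a

/-- `g_a(T_v)`: the maximal number of nicely coloured vertices of a compatible nicely
coloured subtree, with nice colour `a`, of the subtree of `T` rooted at `v`. -/
noncomputable def g {k : ℕ} (c : V → Fin k) (a : Fin k) (v : V) : ℕ :=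
  sSup {m | ∃ S r, S ⊆ T.Desc v ∧ T.IsNicelySubtree c a S r ∧
    m = {u ∈ S | c u = a}.ncard}

end ParentTree

/-- A safflower coloured with `k` colours: a rooted tree whose vertex set is partitioned
into consecutive parts `T_0, …, T_{n-1}` (the original trees), the roots (`stem i`) of the
parts forming a path (the stem) starting at the root, each part being a nicely coloured
binary subtree (with nice colour `nice i`), and the whole colouring being a parity vertex
colouring. -/
structure Safflower (V : Type) (k : ℕ) where
  tree : ParentTree V
  color : V → Fin k
  parity : IsParityColoring tree.graph color
  n : ℕ
  npos : 0 < n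
  /-- the roots `r_1, …, r_n` of the original trees, forming the stem -/
  stem : Fin n → V
  stem_inj : Function.Injective stem
  stem_root : stem ⟨0, npos⟩ = tree.root
  stem_parent : ∀ (i : ℕ) (h : i + 1 < n),
    tree.parent (stem ⟨i + 1, h⟩) = stem ⟨i, Nat.lt_of_succ_lt h⟩
  /-- which original tree a vertex belongs to -/
  part : V → Fin n
  part_stem : ∀ i, part (stem i) = i
  part_parent : ∀ v, v ≠ stem (part v) → part (tree.parent v) = part v
  /-- each original tree is binary -/
  binary : ∀ v, {u | tree.parent u = v ∧ u ≠ v ∧ part u = part v}.ncard ≤ 2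
  /-- the nice colour of each original tree -/
  nice : Fin n → Fin k
  nice_root : ∀ i, color (stem i) = nice i
  /-- leaves and branched vertices of each original tree get its nice colour -/
  nice_special : ∀ v,
    ({u | tree.parent u = v ∧ u ≠ v ∧ part u = part v} = ∅ ∨
      ∃ u w, u ≠ w ∧ tree.parent u = v ∧ u ≠ v ∧ part u = part v ∧
        tree.parent w = v ∧ w ≠ v ∧ part w = part v) →
    color v = nice (part v)

namespace Safflower

variable {V : Type} {k : ℕ} (F : Safflower V k)

/-- A nicely coloured vertex of a safflower: a vertex coloured with the nice colour
of its original tree. -/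
def NiceVertex (v : V) : Prop := F.color v = F.nice (F.part v)

/-- `Num F`: the number of nicely coloured vertices of the safflower `F`. -/
noncomputable def Num : ℕ := {v | F.NiceVertex v}.ncard

end Safflower

/-!
A path from the root only ever descends from a father to a son, so the vertices following `v`
on `C₁` and `C₂` are sons `u₁`, `u₂` of `v`, distinct because `v` is the last common vertex, with
`eᵢ` a descendant of `uᵢ`. A son lying in another original tree than `v` is a stem vertex
`r_{j+1}` with father `r_j`, so at most one son leaves the tree of `v`. A son `u` staying in the
tree of `v` keeps all its descendants there: the tree can only change at stem vertices, and the
ancestors of a stem vertex are stem vertices, which leave their tree towards the father. Hence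
some `eᵢ` lies in the original tree of `v`, and `v` has the nice colour of that tree, being
either branched in it or a stem vertex.
-/

namespace ParentTree

variable {V : Type} (T : ParentTree V)

lemma parent_getVert_succ {x : V} {p : T.graph.Walk T.root x} (hp : p.IsPath) {i : ℕ}
    (hi : i < p.length) : T.parent (p.getVert (i + 1)) = p.getVert i := by
  obtain ⟨hne, hup | hdown⟩ := SimpleGraph.fromRel_adj _ _ _ |>.mp (p.adj_getVert_succ hi)
  · exfalso
    cases i with
    | zero => exact hne (by rw [← hup, p.getVert_zero, T.parent_root])
    | succ i =>
      have hprev := parent_getVert_succ hp (i := i) (by omega)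
      have := hp.getVert_injOn (by simp only [Set.mem_ofPred_eq]; omega)
        (by simp only [Set.mem_ofPred_eq]; omega) (hprev.symm.trans hup)
      omega
  · exact hdown

lemma iterate_parent_getVert {x : V} {p : T.graph.Walk T.root x} (hp : p.IsPath) (i : ℕ) :
    ∀ {j : ℕ}, i + j ≤ p.length → T.parent^[j] (p.getVert (i + j)) = p.getVert i
  | 0, _ => rfl
  | j + 1, hij => by
    rw [Function.iterate_succ_apply, ← add_assoc, T.parent_getVert_succ hp (by omega)]
    exact iterate_parent_getVert hp i (by omega)

lemma exists_child_mem_support [DecidableEq V] {x w : V} {p : T.graph.Walk T.root x}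
    (hp : p.IsPath) (hw : w ∈ p.support) (hwx : w ≠ x) :
    ∃ u ∈ T.children w, u ∈ p.support ∧ p.support.idxOf u = p.support.idxOf w + 1 ∧
      x ∈ T.Desc u := by
  set a := p.support.idxOf w
  have hpw : p.getVert a = w := p.getVert_support_idxOf hw
  have ha : a < p.length := by
    have := List.idxOf_lt_length_of_mem hw
    rw [p.length_support] at this
    refine lt_of_le_of_ne (by omega) fun h => hwx ?_
    rw [← hpw, h, p.getVert_length]
  refine ⟨p.getVert (a + 1), ⟨?_, ?_⟩, p.getVert_mem_support _, ?_, ?_⟩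
  · rw [T.parent_getVert_succ hp ha, hpw]
  · intro h
    have := hp.getVert_injOn (by simp only [Set.mem_ofPred_eq]; omega)
      (by simp only [Set.mem_ofPred_eq]; omega) (h.trans hpw.symm)
    omega
  · have hlt := List.idxOf_lt_length_of_mem (p.getVert_mem_support (a + 1))
    rw [p.length_support] at hlt
    exact hp.getVert_injOn (by simp only [Set.mem_ofPred_eq]; omega)
      (by simp only [Set.mem_ofPred_eq]; omega)
      (p.getVert_support_idxOf (p.getVert_mem_support _))
  · refine ⟨p.length - (a + 1), ?_⟩
    have := T.iterate_parent_getVert hp (a + 1) (j := p.length - (a + 1)) (by omega)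
    rwa [Nat.add_sub_cancel' (by omega), p.getVert_length] at this

end ParentTree

namespace Safflower

variable {V : Type} {k : ℕ} (F : Safflower V k)

lemma parent_stem (i : Fin F.n) :
    F.tree.parent (F.stem i) = F.stem ⟨i - 1, by omega⟩ := by
  obtain ⟨_ | i, hi⟩ := i
  · change F.tree.parent (F.stem ⟨0, hi⟩) = F.stem ⟨0, hi⟩
    rw [F.stem_root, F.tree.parent_root]
  · exact F.stem_parent i hi

lemma niceVertex_stem (i : Fin F.n) : F.NiceVertex (F.stem i) := by
  rw [NiceVertex, F.part_stem, F.nice_root]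

lemma mapsTo_parent_range_stem :
    Set.MapsTo F.tree.parent (Set.range F.stem) (Set.range F.stem) := by
  rintro _ ⟨i, rfl⟩
  exact ⟨_, (F.parent_stem i).symm⟩

lemma part_parent_ne_of_mem_range_stem {u : V} (hu : u ∈ Set.range F.stem)
    (hpu : F.tree.parent u ≠ u) : F.part (F.tree.parent u) ≠ F.part u := by
  obtain ⟨i, rfl⟩ := hu
  intro h
  rw [F.parent_stem, F.part_stem, F.part_stem, Fin.ext_iff] at h
  rw [F.parent_stem] at hpu
  exact hpu (congrArg F.stem (Fin.ext h))

lemma eq_stem_of_part_parent_ne {x : V} (h : F.part (F.tree.parent x) ≠ F.part x) :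
    x = F.stem (F.part x) ∧ (F.part x : ℕ) = F.part (F.tree.parent x) + 1 := by
  have hx : x = F.stem (F.part x) := by
    by_contra hx
    exact h (F.part_parent x hx)
  refine ⟨hx, ?_⟩
  rw [hx, F.parent_stem, F.part_stem, F.part_stem] at h ⊢
  rw [Ne, Fin.ext_iff] at h
  dsimp only at h ⊢
  omega

lemma part_eq_of_mem_desc {u e : V} (hu : F.tree.parent u ≠ u)
    (hpart : F.part (F.tree.parent u) = F.part u) (he : e ∈ F.tree.Desc u) :
    F.part e = F.part u := by
  obtain ⟨m, hm⟩ := he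
  induction m generalizing e with
  | zero => rw [← hm, Function.iterate_zero_apply]
  | succ m ih =>
    rw [Function.iterate_succ_apply] at hm
    have hpe := ih hm
    by_contra h
    have he : e ∈ Set.range F.stem :=
      ⟨_, (F.eq_stem_of_part_parent_ne (hpe ▸ Ne.symm h)).1.symm⟩
    have hu_stem : u ∈ Set.range F.stem := by
      rw [← hm, ← Function.iterate_succ_apply]
      exact F.mapsTo_parent_range_stem.iterate _ he
    exact F.part_parent_ne_of_mem_range_stem hu_stem hu hpart

lemma niceVertex_of_child_part_ne {u v : V} (hu : u ∈ F.tree.children v)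
    (h : F.part u ≠ F.part v) : F.NiceVertex v := by
  have hstem := (F.eq_stem_of_part_parent_ne (hu.1 ▸ Ne.symm h)).1
  rw [← hu.1, hstem, F.parent_stem]
  exact F.niceVertex_stem _

lemma color_eq_of_mem_desc_child {u v e : V} (hu : u ∈ F.tree.children v)
    (hpart : F.part u = F.part v) (hv : F.NiceVertex v) (he : F.NiceVertex e)
    (hd : e ∈ F.tree.Desc u) : F.color e = F.color v := by
  have hpe := F.part_eq_of_mem_desc (hu.1 ▸ hu.2.symm) (hu.1 ▸ hpart.symm) hd
  rw [he, hv, hpe, hpart]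

lemma color_eq_or_color_eq_of_children {u₁ u₂ v e₁ e₂ : V} (hu₁ : u₁ ∈ F.tree.children v)
    (hu₂ : u₂ ∈ F.tree.children v) (hne : u₁ ≠ u₂) (he₁ : F.NiceVertex e₁)
    (he₂ : F.NiceVertex e₂) (hd₁ : e₁ ∈ F.tree.Desc u₁) (hd₂ : e₂ ∈ F.tree.Desc u₂) :
    F.color e₁ = F.color v ∨ F.color e₂ = F.color v := by
  by_cases h₁ : F.part u₁ = F.part v <;> by_cases h₂ : F.part u₂ = F.part v
  · have hv : F.NiceVertex v :=
      F.nice_special v (Or.inr ⟨u₁, u₂, hne, hu₁.1, hu₁.2, h₁, hu₂.1, hu₂.2, h₂⟩)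
    exact Or.inl (F.color_eq_of_mem_desc_child hu₁ h₁ hv he₁ hd₁)
  · exact Or.inl <| F.color_eq_of_mem_desc_child hu₁ h₁
      (F.niceVertex_of_child_part_ne hu₂ h₂) he₁ hd₁
  · exact Or.inr <| F.color_eq_of_mem_desc_child hu₂ h₂
      (F.niceVertex_of_child_part_ne hu₁ h₁) he₂ hd₂
  · -- both sons would be the stem vertex following `v`
    obtain ⟨hs₁, hp₁⟩ := F.eq_stem_of_part_parent_ne (hu₁.1 ▸ Ne.symm h₁)
    obtain ⟨hs₂, hp₂⟩ := F.eq_stem_of_part_parent_ne (hu₂.1 ▸ Ne.symm h₂)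
    rw [hu₁.1] at hp₁
    rw [hu₂.1] at hp₂
    exact absurd (by rw [hs₁, hs₂, Fin.ext (hp₁.trans hp₂.symm)]) hne

end Safflower

/-- In a safflower `F` rooted at `r`: if `C₁`, `C₂` are paths from `r` to nicely coloured
vertices `e₁`, `e₂` of `F` and `v` is the last common vertex of `C₁` and `C₂`, then at
least one of `e₁`, `e₂` has the same colour as `v`. -/
theorem safflower_last_common_color {V : Type} [DecidableEq V] {k : ℕ}
    (F : Safflower V k) (e₁ e₂ : V) (he₁ : F.NiceVertex e₁) (he₂ : F.NiceVertex e₂)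
    (C₁ : F.tree.graph.Walk F.tree.root e₁) (hC₁ : C₁.IsPath)
    (C₂ : F.tree.graph.Walk F.tree.root e₂) (hC₂ : C₂.IsPath)
    (v : V) (hv₁ : v ∈ C₁.support) (hv₂ : v ∈ C₂.support)
    (hlast : ∀ w, w ∈ C₁.support → w ∈ C₂.support →
      C₁.support.idxOf w ≤ C₁.support.idxOf v) :
    F.color e₁ = F.color v ∨ F.color e₂ = F.color v := by
  by_cases h₁ : v = e₁
  · exact Or.inl (congrArg F.color h₁.symm)
  by_cases h₂ : v = e₂
  · exact Or.inr (congrArg F.color h₂.symm)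
  obtain ⟨u₁, hu₁, hu₁C₁, hidx, hd₁⟩ := F.tree.exists_child_mem_support hC₁ hv₁ h₁
  obtain ⟨u₂, hu₂, hu₂C₂, -, hd₂⟩ := F.tree.exists_child_mem_support hC₂ hv₂ h₂
  refine F.color_eq_or_color_eq_of_children hu₁ hu₂ ?_ he₁ he₂ hd₁ hd₂
  rintro rfl
  have := hlast u₁ hu₁C₁ hu₂C₂
  omega
end

section
/- For every safflower F coloured with k colours, the number Num(F) of nicely coloured vertices of F satisfies Num(F) ≤ 2^k − 1. -/
open SimpleGraph

namespace ParentTree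
variable {V : Type} (T : ParentTree V)
lemma parent_eq_self_iff {v : V} : T.parent v = v ↔ v = T.root := by
  constructor
  · intro h
    obtain ⟨m, hm⟩ := T.reaches v
    have hfix : T.parent^[m] v = v := Function.iterate_fixed h m
    rw [hfix] at hm; exact hm
  · rintro rfl; exact T.parent_root

lemma depth_spec (v : V) : T.parent^[T.depth v] v = T.root := Nat.sInf_mem (T.reaches v)

lemma depth_le {v : V} {m : ℕ} (h : T.parent^[m] v = T.root) : T.depth v ≤ m := Nat.sInf_le h

lemma ne_root_of_lt_depth {v : V} {m : ℕ} (h : m < T.depth v) : T.parent^[m] v ≠ T.root :=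
  fun hc => absurd (T.depth_le hc) (not_le.2 h)

lemma depth_root : T.depth T.root = 0 := Nat.le_zero.1 (T.depth_le rfl)

lemma depth_parent {v : V} (hv : v ≠ T.root) : T.depth v = T.depth (T.parent v) + 1 := by
  have h0 : T.depth v ≠ 0 := by
    intro h
    have := T.depth_spec v
    rw [h] at this
    exact hv this
  obtain ⟨m, hm⟩ := Nat.exists_eq_succ_of_ne_zero h0
  have h1 : T.parent^[m] (T.parent v) = T.root := by
    rw [← Function.iterate_succ_apply, ← hm]; exact T.depth_spec v
  have h2 : T.depth (T.parent v) ≤ m := T.depth_le h1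
  have h3 : T.depth v ≤ T.depth (T.parent v) + 1 := by
    apply T.depth_le
    rw [Function.iterate_succ_apply]
    exact T.depth_spec (T.parent v)
  omega

lemma depth_iterate {v : V} {m : ℕ} (h : m ≤ T.depth v) :
    T.depth (T.parent^[m] v) = T.depth v - m := by
  induction m with
  | zero => simp
  | succ n ih =>
    have hn : n ≤ T.depth v := by omega
    have hne : T.parent^[n] v ≠ T.root := T.ne_root_of_lt_depth (by omega)
    have hd := T.depth_parent hne
    rw [ih hn] at hd
    rw [Function.iterate_succ_apply']
    omega

/-- The list of ancestors of `v`, from `v` up to the root. -/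
noncomputable def anc (v : V) : List V :=
  (List.range (T.depth v + 1)).map (fun m => T.parent^[m] v)

lemma mem_anc {v x : V} : x ∈ T.anc v ↔ ∃ m ≤ T.depth v, T.parent^[m] v = x := by
  simp only [anc, List.mem_map, List.mem_range, Nat.lt_succ_iff]

lemma nodup_iterates {v : V} {m : ℕ} (h : m ≤ T.depth v + 1) :
    ((List.range m).map (fun j => T.parent^[j] v)).Nodup := by
  apply List.Nodup.map_on _ (List.nodup_range (n := m))
  intro a ha b hb hab
  simp only [List.mem_range] at ha hb
  have h1 := T.depth_iterate (v := v) (m := a) (by omega)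
  have h2 := T.depth_iterate (v := v) (m := b) (by omega)
  rw [hab, h2] at h1
  omega

lemma anc_nodup (v : V) : (T.anc v).Nodup := T.nodup_iterates le_rfl

lemma anc_decomp {v : V} {m : ℕ} (h : m ≤ T.depth v) :
    T.anc v = (List.range m).map (fun j => T.parent^[j] v) ++ T.anc (T.parent^[m] v) := by
  have hd := T.depth_iterate h
  have hsum : T.depth v + 1 = m + (T.depth (T.parent^[m] v) + 1) := by omega
  rw [anc, hsum, List.range_add, List.map_append]
  congr 1
  rw [anc, List.map_map]
  apply List.map_congr_left
  intro j _
  simp only [Function.comp_apply]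
  rw [add_comm m j, Function.iterate_add_apply]

open Classical in
/-- A walk going `m` steps up from `v`. -/
noncomputable def walkUp : (m : ℕ) → (v : V) → T.graph.Walk v (T.parent^[m] v)
  | 0, _ => Walk.nil
  | m + 1, v =>
    if h : T.parent v = v then
      Walk.nil.copy rfl (Function.iterate_fixed h (m + 1)).symm
    else
      (Walk.cons
        (by rw [graph, fromRel_adj]; exact ⟨fun e => h e.symm, Or.inl rfl⟩)
        (walkUp m (T.parent v))).copy rfl (Function.iterate_succ_apply T.parent m v).symm

lemma walkUp_support {m : ℕ} {v : V} (h : m ≤ T.depth v) :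
    (T.walkUp m v).support = (List.range (m + 1)).map (fun j => T.parent^[j] v) := by
  induction m generalizing v with
  | zero => simp [walkUp]
  | succ n ih =>
    have hvroot : v ≠ T.root := by
      intro e
      rw [e, T.depth_root] at h
      omega
    have hv : T.parent v ≠ v := fun e => hvroot (T.parent_eq_self_iff.1 e)
    have hdp : n ≤ T.depth (T.parent v) := by
      have := T.depth_parent hvroot
      omega
    rw [walkUp, dif_neg hv]
    rw [Walk.support_copy, Walk.support_cons, ih hdp]
    rw [List.range_succ_eq_map (n := n + 1)]
    simp only [List.map_cons, Function.iterate_zero, id_eq, List.map_map]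
    exact congrArg (v :: ·)
      (List.map_congr_left (fun j _ => (Function.iterate_succ_apply T.parent j v).symm))


lemma walkUp_isPath {m : ℕ} {v : V} (h : m ≤ T.depth v) : (T.walkUp m v).IsPath := by
  rw [Walk.isPath_def, T.walkUp_support h]
  exact T.nodup_iterates (by omega)

end ParentTree

namespace Safflower

variable {V : Type} {k : ℕ} (F : Safflower V k)

lemma part_parent_le (x : V) : (F.part (F.tree.parent x) : ℕ) ≤ (F.part x : ℕ) := by
  by_cases hfix : F.tree.parent x = x
  · rw [hfix]
  by_cases hstem : x = F.stem (F.part x)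
  · rcases hp : F.part x with ⟨iv, hiv⟩
    rcases iv with _ | j
    · exfalso
      apply hfix
      have hx : x = F.tree.root := by
        rw [hstem, hp, ← F.stem_root]
      rw [hx, F.tree.parent_root]
    · have hpar : F.tree.parent x = F.stem ⟨j, Nat.lt_of_succ_lt hiv⟩ := by
        conv_lhs => rw [hstem, hp]
        exact F.stem_parent j hiv
      rw [hpar, F.part_stem]
      simp [hp]
  · rw [F.part_parent x hstem]

lemma part_iterate_le (x : V) (m : ℕ) :
    (F.part (F.tree.parent^[m] x) : ℕ) ≤ (F.part x : ℕ) := by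
  induction m with
  | zero => exact le_rfl
  | succ n ih =>
    rw [Function.iterate_succ_apply']
    exact le_trans (F.part_parent_le _) ih

/-- If the chain from `v` drops below part `i` by step `m`, it passes through `stem i`
strictly before step `m`. -/
lemma stem_mem_chain (v : V) (i : ℕ) (hin : i < F.n) :
    ∀ m : ℕ, (F.part (F.tree.parent^[m] v) : ℕ) < i → i ≤ (F.part v : ℕ) →
      ∃ m' < m, F.tree.parent^[m'] v = F.stem ⟨i, hin⟩ := by
  intro m
  induction m with
  | zero => intro h1 h2; simp only [Function.iterate_zero, id_eq] at h1; omega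
  | succ mm ih =>
    intro h1 h2
    by_cases hc : (F.part (F.tree.parent^[mm] v) : ℕ) < i
    · obtain ⟨m', hm', he⟩ := ih hc h2
      exact ⟨m', by omega, he⟩
    · push_neg at hc
      set x := F.tree.parent^[mm] v with hx
      rw [Function.iterate_succ_apply', ← hx] at h1
      have hxs : x = F.stem (F.part x) := by
        by_contra hne
        rw [F.part_parent x hne] at h1
        omega
      rcases hpx : F.part x with ⟨xv, hxv⟩
      rcases xv with _ | j
      · -- part x = 0, so x = root and parent x = x, contradiction with h1 < i ≤ part x
        exfalso
        have hroot : x = F.tree.root := by rw [hxs, hpx, ← F.stem_root]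
        rw [hroot, F.tree.parent_root, ← hroot] at h1
        omega
      · have hpar : F.tree.parent x = F.stem ⟨j, Nat.lt_of_succ_lt hxv⟩ := by
          conv_lhs => rw [hxs, hpx]
          exact F.stem_parent j hxv
        rw [hpar, F.part_stem] at h1
        rw [hpx] at hc
        simp at hc h1
        have hij : i = j + 1 := by omega
        refine ⟨mm, Nat.lt_succ_self mm, ?_⟩
        rw [← hx, hxs, hpx]
        congr 1
        exact Fin.ext hij.symm

end Safflower

namespace Safflower

variable {V : Type} {k : ℕ} (F : Safflower V k)

/-- The parity vector of the path from `v` to the root. -/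
noncomputable def pvec (v : V) : Fin k → ZMod 2 :=
  fun i => (((F.tree.anc v).map F.color).count i : ZMod 2)

lemma pvec_ne_zero (v : V) : F.pvec v ≠ 0 := by
  set W := (F.tree.walkUp (F.tree.depth v) v).copy rfl (F.tree.depth_spec v) with hW
  have hWp : W.IsPath := by
    rw [hW, SimpleGraph.Walk.isPath_copy]
    exact F.tree.walkUp_isPath le_rfl
  have hsup : W.support = F.tree.anc v := by
    rw [hW, SimpleGraph.Walk.support_copy, F.tree.walkUp_support le_rfl]
    rfl
  obtain ⟨i, hi⟩ := F.parity W hWp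
  intro h0
  have h := congrFun h0 i
  rw [hsup] at hi
  simp only [pvec, Pi.zero_apply] at h
  rw [ZMod.natCast_eq_zero_iff] at h
  rw [Nat.odd_iff] at hi
  omega

lemma pvec_injOn_aux {u v : V} (hu : F.NiceVertex u) (hv : F.NiceVertex v)
    (hne : u ≠ v) (hle : (F.part u : ℕ) ≤ (F.part v : ℕ)) (heq : F.pvec u = F.pvec v) :
    False := by
  classical
  rw [NiceVertex] at hu hv
  -- the meet point `w`
  have hSne : {m | F.tree.parent^[m] u ∈ F.tree.anc v}.Nonempty := by
    refine ⟨F.tree.depth u, ?_⟩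
    rw [Set.mem_setOf_eq, F.tree.depth_spec u, ParentTree.mem_anc]
    exact ⟨F.tree.depth v, le_rfl, F.tree.depth_spec v⟩
  set d := sInf {m | F.tree.parent^[m] u ∈ F.tree.anc v} with hd
  have hdmem : F.tree.parent^[d] u ∈ F.tree.anc v := Nat.sInf_mem hSne
  have hdmin : ∀ m < d, F.tree.parent^[m] u ∉ F.tree.anc v := fun m hm =>
    Nat.notMem_of_lt_sInf hm
  have hdle : d ≤ F.tree.depth u := by
    apply Nat.sInf_le
    rw [Set.mem_setOf_eq, F.tree.depth_spec u, ParentTree.mem_anc]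
    exact ⟨F.tree.depth v, le_rfl, F.tree.depth_spec v⟩
  set w := F.tree.parent^[d] u with hwdef
  obtain ⟨e, hele, hew⟩ := (F.tree.mem_anc).1 hdmem
  -- `w` lies in the same part as `u`
  have hpw_le : (F.part w : ℕ) ≤ (F.part u : ℕ) := F.part_iterate_le u d
  have hpw : (F.part w : ℕ) = (F.part u : ℕ) := by
    by_contra hlt'
    have hlt : (F.part w : ℕ) < (F.part u : ℕ) := lt_of_le_of_ne hpw_le hlt'
    have hin : ((F.part u : ℕ)) < F.n := (F.part u).isLt
    obtain ⟨m', hm', hsu⟩ := F.stem_mem_chain u (F.part u) hin d hlt le_rfl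
    have hlt2 : (F.part (F.tree.parent^[e] v) : ℕ) < (F.part u : ℕ) := by rw [hew]; exact hlt
    obtain ⟨m'', hm'', hsv⟩ := F.stem_mem_chain v (F.part u) hin e hlt2 hle
    apply hdmin m' hm'
    rw [hsu, ← hsv]
    exact (F.tree.mem_anc).2 ⟨m'', by omega, rfl⟩
  have hpwf : F.part w = F.part u := Fin.ext hpw
  -- `w` gets the nice colour of the part of `u`
  have hcw : F.color w = F.nice (F.part u) := by
    by_cases hwu : w = u
    · rw [hwu]; exact hu
    by_cases hwv : w = v
    · rw [hwv, hv]
      congr 1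
      rw [← hpwf, hwv]
    by_cases hws : w = F.stem (F.part w)
    · rw [hws, F.nice_root, hpwf]
    · -- `w` is branched within its part
      have hd1 : 1 ≤ d := by
        rcases Nat.eq_zero_or_pos d with h0 | h
        · exfalso; apply hwu; rw [hwdef, h0]; rfl
        · exact h
      have he1 : 1 ≤ e := by
        rcases Nat.eq_zero_or_pos e with h0 | h
        · exfalso; apply hwv; rw [← hew, h0]; rfl
        · exact h
      set x := F.tree.parent^[d-1] u with hxdef
      set y := F.tree.parent^[e-1] v with hydef
      have hxpar : F.tree.parent x = w := by
        rw [hxdef, ← Function.iterate_succ_apply' F.tree.parent (d-1) u, hwdef]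
        congr 1
        omega
      have hypar : F.tree.parent y = w := by
        rw [hydef, ← Function.iterate_succ_apply' F.tree.parent (e-1) v, ← hew]
        congr 1
        omega
      have hxanc : x ∉ F.tree.anc v := hdmin (d-1) (by omega)
      have hxw : x ≠ w := fun hxe => hxanc (hxe ▸ hdmem)
      have hyw : y ≠ w := by
        intro hye
        have hfix : F.tree.parent w = w := by conv_lhs => rw [← hye, hypar]
        have hwr : w = F.tree.root := (F.tree.parent_eq_self_iff).1 hfix
        apply hws
        have hw0 : w = F.stem ⟨0, F.npos⟩ := by rw [hwr, ← F.stem_root]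
        conv_lhs => rw [hw0]
        rw [hw0, F.part_stem]
      have hypart : F.part y = F.part w := by
        by_cases hys : y = F.stem (F.part y)
        · exfalso
          rcases hpy : F.part y with ⟨yv, hyv⟩
          rcases yv with _ | j
          · have hyr : y = F.tree.root := by rw [hys, hpy, ← F.stem_root]
            apply hyw
            rw [hyr] at hypar
            rw [F.tree.parent_root] at hypar
            rw [hyr, hypar]
          · have hp2 : F.tree.parent y = F.stem ⟨j, Nat.lt_of_succ_lt hyv⟩ := by
              conv_lhs => rw [hys, hpy]
              exact F.stem_parent j hyv
            apply hws
            have hw2 : w = F.stem ⟨j, Nat.lt_of_succ_lt hyv⟩ := hypar.symm.trans hp2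
            rw [hw2, F.part_stem]
        · rw [← hypar]
          exact (F.part_parent y hys).symm
      have hxpart : F.part x = F.part w := by
        apply Fin.ext
        have h1 : (F.part w : ℕ) ≤ (F.part x : ℕ) := by rw [← hxpar]; exact F.part_parent_le x
        have h2 : (F.part x : ℕ) ≤ (F.part u : ℕ) := F.part_iterate_le u (d-1)
        omega
      have hyanc : y ∈ F.tree.anc v := (F.tree.mem_anc).2 ⟨e-1, by omega, rfl⟩
      have hxy : x ≠ y := fun hxe => hxanc (hxe ▸ hyanc)
      have hns := F.nice_special w
        (Or.inr ⟨x, y, hxy, hxpar, hxw, hxpart, hypar, hyw, hypart⟩)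
      rw [hpwf] at hns
      exact hns
  -- the path from `u` to `v` through `w`
  set p1 := (F.tree.walkUp d u).copy rfl hwdef.symm with hp1def
  set p2 := (F.tree.walkUp e v).copy rfl hew with hp2def
  have hsupp1 : p1.support
      = (List.range d).map (fun j => F.tree.parent^[j] u) ++ [w] := by
    rw [hp1def, SimpleGraph.Walk.support_copy, F.tree.walkUp_support hdle,
      List.range_succ, List.map_append, List.map_singleton, ← hwdef]
  have hsupp2 : p2.support
      = (List.range e).map (fun j => F.tree.parent^[j] v) ++ [w] := by
    rw [hp2def, SimpleGraph.Walk.support_copy, F.tree.walkUp_support hele,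
      List.range_succ, List.map_append, List.map_singleton, hew]
  set P := p1.append p2.reverse with hPdef
  have hPsupp : P.support
      = ((List.range d).map (fun j => F.tree.parent^[j] u))
        ++ (((List.range e).map (fun j => F.tree.parent^[j] v)) ++ [w]).reverse := by
    rw [hPdef, SimpleGraph.Walk.support_append, hsupp1,
      SimpleGraph.Walk.support_reverse, hsupp2]
    rw [List.reverse_append]
    simp
  have hnd2 : (((List.range e).map (fun j => F.tree.parent^[j] v)) ++ [w]).Nodup := by
    have hh := F.tree.nodup_iterates (v := v) (m := e+1) (by omega)
    rw [List.range_succ, List.map_append, List.map_singleton, hew] at hh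
    exact hh
  have hsub : ∀ a ∈ ((List.range e).map (fun j => F.tree.parent^[j] v)) ++ [w],
      a ∈ F.tree.anc v := by
    intro a ha
    rcases List.mem_append.1 ha with h | h
    · obtain ⟨j, hj, rfl⟩ := List.mem_map.1 h
      rw [List.mem_range] at hj
      exact (F.tree.mem_anc).2 ⟨j, by omega, rfl⟩
    · rw [List.mem_singleton] at h
      rw [h]
      exact hdmem
  have hPpath : P.IsPath := by
    rw [SimpleGraph.Walk.isPath_def, hPsupp, List.nodup_append]
    refine ⟨F.tree.nodup_iterates (by omega), List.nodup_reverse.2 hnd2, ?_⟩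
    intro a ha b hb
    obtain ⟨j, hj, rfl⟩ := List.mem_map.1 ha
    rw [List.mem_range] at hj
    rw [List.mem_reverse] at hb
    rintro rfl; exact hdmin j hj (hsub _ hb)
  -- drop the first vertex of the path
  obtain ⟨b, hadj, q, hq⟩ := SimpleGraph.Walk.not_nil_iff.1
    (SimpleGraph.Walk.not_nil_of_ne (p := P) hne)
  have hqpath : q.IsPath := by
    rw [hq] at hPpath
    exact hPpath.of_cons
  obtain ⟨i, hodd⟩ := F.parity q hqpath
  rw [Nat.odd_iff] at hodd
  -- counting
  have hAu : ((F.tree.anc u).map F.color).count i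
      = (((List.range d).map (fun j => F.tree.parent^[j] u)).map F.color).count i
        + ((F.tree.anc w).map F.color).count i := by
    rw [F.tree.anc_decomp hdle, List.map_append, List.count_append, ← hwdef]
  have hAv : ((F.tree.anc v).map F.color).count i
      = (((List.range e).map (fun j => F.tree.parent^[j] v)).map F.color).count i
        + ((F.tree.anc w).map F.color).count i := by
    rw [F.tree.anc_decomp hele, List.map_append, List.count_append, hew]
  have hPcount : (P.support.map F.color).count i
      = (((List.range d).map (fun j => F.tree.parent^[j] u)).map F.color).count i
        + (((List.range e).map (fun j => F.tree.parent^[j] v)).map F.color).count i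
        + (([w]).map F.color).count i := by
    rw [hPsupp, List.map_append, List.count_append, List.map_reverse,
      List.count_reverse, List.map_append, List.count_append]
    omega
  have hPq : (P.support.map F.color).count i
      = (([u]).map F.color).count i + (q.support.map F.color).count i := by
    rw [hq, SimpleGraph.Walk.support_cons, List.map_cons, List.count_cons]
    simp [List.count_singleton']
    omega
  have hcount_uw : (([w]).map F.color).count i = (([u]).map F.color).count i := by
    have : F.color w = F.color u := by rw [hcw, hu]
    simp [this]
  have hmod : ((F.tree.anc u).map F.color).count i % 2
      = ((F.tree.anc v).map F.color).count i % 2 := by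
    have h := congrFun heq i
    simp only [pvec] at h
    rw [ZMod.natCast_eq_natCast_iff] at h
    exact h
  omega

end Safflower

theorem safflower_num_le' {V : Type} [Fintype V] {k : ℕ} (F : Safflower V k) :
    F.Num ≤ 2 ^ k - 1 := by
  classical
  have hinj : Set.InjOn F.pvec {v | F.NiceVertex v} := by
    intro u hu v hv h
    by_contra hne
    rcases le_total ((F.part u : ℕ)) ((F.part v : ℕ)) with hle | hle
    · exact F.pvec_injOn_aux hu hv hne hle h
    · exact F.pvec_injOn_aux hv hu (Ne.symm hne) hle h.symm
  have hmaps : ∀ a ∈ {v | F.NiceVertex v}, F.pvec a ∈ {g : Fin k → ZMod 2 | g ≠ 0} :=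
    fun a _ => F.pvec_ne_zero a
  have hcard : ({g : Fin k → ZMod 2 | g ≠ 0}).ncard = 2 ^ k - 1 := by
    have h1 : {g : Fin k → ZMod 2 | g ≠ 0} = ({0} : Set (Fin k → ZMod 2))ᶜ := by
      ext g; simp
    rw [h1, Set.ncard_eq_toFinset_card', Set.toFinset_compl, Set.toFinset_singleton,
      Finset.card_compl, Finset.card_singleton, Fintype.card_fun, ZMod.card, Fintype.card_fin]
  calc F.Num ≤ ({g : Fin k → ZMod 2 | g ≠ 0}).ncard :=
        Set.ncard_le_ncard_of_injOn F.pvec hmaps hinj (Set.toFinite _)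
    _ = 2 ^ k - 1 := hcard

/-- For every safflower `F` coloured with `k` colours, the number of nicely coloured
vertices of `F` satisfies `Num(F) ≤ 2^k − 1`. -/
theorem safflower_num_le {V : Type} [Fintype V] {k : ℕ} (F : Safflower V k) :
    F.Num ≤ 2 ^ k - 1 := by
  exact safflower_num_le' F
end

section
/- Let T be a properly coloured rooted binary tree, v a vertex with sons s and t, and c the colour of v. Then g_c(T_v) = g_c(T_s) + g_c(T_t) + 1, where g_c(T') denotes the maximum number of nicely coloured vertices in a compatible nicely coloured subtree of T' with nice colour c. -/
open SimpleGraph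

namespace ParentTree

variable {V : Type} (T : ParentTree V)

variable {T : ParentTree V}

lemma iter_root (n : ℕ) : T.parent^[n] T.root = T.root :=
  Function.iterate_fixed T.parent_root n

lemma eq_root_of_periodic {u : V} {d : ℕ} (hd : d ≠ 0) (h : T.parent^[d] u = u) :
    u = T.root := by
  obtain ⟨N, hN⟩ := T.reaches u
  have hmul : ∀ k, T.parent^[d * k] u = u := by
    intro k; induction k with
    | zero => simp
    | succ k ih =>
      rw [Nat.mul_succ, Function.iterate_add_apply, h, ih]
  have h1 : 1 ≤ d := Nat.one_le_iff_ne_zero.2 hd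
  have hle : N ≤ d * N := Nat.le_mul_of_pos_left N (by omega)
  have : T.parent^[d * N] u = T.root := by
    have := Function.iterate_add_apply T.parent (d * N - N) N u
    rw [Nat.sub_add_cancel hle] at this
    rw [this, hN, iter_root]
  rw [← hmul N, this]

lemma root_eq_of_mem_desc {x : V} (h : T.root ∈ T.Desc x) : x = T.root := by
  obtain ⟨m, hm⟩ := h; rw [iter_root] at hm; exact hm.symm

lemma desc_refl (v : V) : v ∈ T.Desc v := ⟨0, rfl⟩

lemma desc_trans {u w x : V} (h1 : u ∈ T.Desc w) (h2 : w ∈ T.Desc x) : u ∈ T.Desc x := by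
  obtain ⟨m, hm⟩ := h1; obtain ⟨n, hn⟩ := h2
  exact ⟨n + m, by rw [Function.iterate_add_apply, hm, hn]⟩

lemma desc_antisymm {u w : V} (h1 : u ∈ T.Desc w) (h2 : w ∈ T.Desc u) : u = w := by
  obtain ⟨m, hm⟩ := h1; obtain ⟨n, hn⟩ := h2
  rcases Nat.eq_zero_or_pos (n + m) with h | h
  · have hm0 : m = 0 := by omega
    rw [hm0] at hm; exact hm
  · have hper : T.parent^[n + m] u = u := by
      rw [Function.iterate_add_apply, hm, hn]
    have hu : u = T.root := eq_root_of_periodic (by omega) hper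
    have hw : w = T.root := by rw [← hm, hu, iter_root]
    rw [hu, hw]

lemma parent_mem_desc {u x : V} (h : u ∈ T.Desc x) (hne : u ≠ x) :
    T.parent u ∈ T.Desc x := by
  obtain ⟨m, hm⟩ := h
  cases m with
  | zero => exact absurd hm hne
  | succ m => exact ⟨m, by rw [← Function.iterate_succ_apply]; exact hm⟩

lemma mem_desc_of_parent_mem {w u x : V} (hw : T.parent w = u) (h : u ∈ T.Desc x) :
    w ∈ T.Desc x := by
  obtain ⟨m, hm⟩ := h
  exact ⟨m + 1, by rw [Function.iterate_succ_apply, hw]; exact hm⟩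

lemma child_mem_desc {w u : V} (hw : T.parent w = u) : w ∈ T.Desc u :=
  mem_desc_of_parent_mem hw (desc_refl u)

lemma desc_comparable {w u y : V} (h1 : w ∈ T.Desc u) (h2 : w ∈ T.Desc y) :
    u ∈ T.Desc y ∨ y ∈ T.Desc u := by
  obtain ⟨j, hj⟩ := h1; obtain ⟨K, hK⟩ := h2
  rcases le_total j K with h | h
  · left
    refine ⟨K - j, ?_⟩
    rw [← hj, ← Function.iterate_add_apply, Nat.sub_add_cancel h]; exact hK
  · right
    refine ⟨j - K, ?_⟩
    rw [← hK, ← Function.iterate_add_apply, Nat.sub_add_cancel h]; exact hj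

lemma chain_mem {S : Set V} {r : V} (hS : T.IsSubtreeWithTop S r) {u : V} (hu : u ∈ S)
    {K : ℕ} (hK : T.parent^[K] u = r) : ∀ k ≤ K, T.parent^[k] u ∈ S := by
  intro k hk
  induction k with
  | zero => exact hu
  | succ k ih =>
    have hk' : k ≤ K := by omega
    have hy : T.parent^[k] u ∈ S := ih hk'
    by_cases hyr : T.parent^[k] u = r
    · have hper : T.parent^[K - k] r = r := by
        rw [← hyr]
        rw [← Function.iterate_add_apply, Nat.sub_add_cancel hk']
        rw [hK, hyr]
      have hr : r = T.root := eq_root_of_periodic (by omega) hper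
      rw [Function.iterate_succ_apply', hyr, hr, T.parent_root, ← hr]
      exact hS.1
    · rw [Function.iterate_succ_apply']
      exact (hS.2 _ hy hyr).1

lemma subtree_subset_desc {S : Set V} {r : V} (hS : T.IsSubtreeWithTop S r) :
    ∀ u ∈ S, u ∈ T.Desc r := by
  have key : ∀ N u, u ∈ S → T.parent^[N] u = T.root → u ∈ T.Desc r := by
    intro N
    induction N with
    | zero =>
      intro u hu h0
      by_cases hur : u = r
      · rw [hur]; exact desc_refl r
      · exact absurd h0 (hS.2 u hu hur).2
    | succ N ih =>
      intro u hu hN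
      by_cases hur : u = r
      · rw [hur]; exact desc_refl r
      · have h1 := hS.2 u hu hur
        have h2 : T.parent^[N] (T.parent u) = T.root := by
          rw [← Function.iterate_succ_apply]; exact hN
        exact mem_desc_of_parent_mem rfl (ih _ h1.1 h2)
  intro u hu
  obtain ⟨N, hN⟩ := T.reaches u
  exact key N u hu hN

lemma exists_child_of_desc {u x : V} (h : u ∈ T.Desc x) (hne : u ≠ x) :
    ∃ w, T.parent w = x ∧ w ≠ x ∧ u ∈ T.Desc w := by
  classical
  have hex : ∃ m, T.parent^[m] u = x := h
  have hm : T.parent^[Nat.find hex] u = x := Nat.find_spec hex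
  have hm0 : Nat.find hex ≠ 0 := by
    intro h0; apply hne; rw [h0] at hm; exact hm
  refine ⟨T.parent^[Nat.find hex - 1] u, ?_, ?_, ⟨Nat.find hex - 1, rfl⟩⟩
  · have h' := Function.iterate_succ_apply' T.parent (Nat.find hex - 1) u
    rw [← h', Nat.succ_eq_add_one, Nat.sub_add_cancel (by omega)]
    exact hm
  · intro heq
    exact Nat.find_min hex (m := Nat.find hex - 1) (by omega) heq

lemma exists_child_in_subtree {S : Set V} {r : V} (hS : T.IsSubtreeWithTop S r)
    {z : V} (hz : z ∈ S) (hne : z ≠ r) :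
    ∃ w, w ∈ S ∧ T.parent w = r ∧ w ≠ r ∧ z ∈ T.Desc w := by
  classical
  have hd := subtree_subset_desc hS z hz
  have hex : ∃ m, T.parent^[m] z = r := hd
  have hm : T.parent^[Nat.find hex] z = r := Nat.find_spec hex
  have hm0 : Nat.find hex ≠ 0 := by
    intro h0; apply hne; rw [h0] at hm; exact hm
  refine ⟨T.parent^[Nat.find hex - 1] z, chain_mem hS hz hm _ (by omega), ?_, ?_,
    ⟨Nat.find hex - 1, rfl⟩⟩
  · have h' := Function.iterate_succ_apply' T.parent (Nat.find hex - 1) z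
    rw [← h', Nat.succ_eq_add_one, Nat.sub_add_cancel (by omega)]
    exact hm
  · intro heq
    exact Nat.find_min hex (m := Nat.find hex - 1) (by omega) heq


lemma child_ne_root {v s : V} (hs : s ∈ T.children v) : s ≠ T.root := by
  intro h
  apply hs.2
  rw [← hs.1, h, T.parent_root]

lemma ne_root_of_mem_desc_child {v s u : V} (hs : s ∈ T.children v) (hu : u ∈ T.Desc s) :
    u ≠ T.root := by
  intro h
  exact child_ne_root hs (root_eq_of_mem_desc (h ▸ hu))

lemma not_mem_desc_child {v s : V} (hs : s ∈ T.children v) : v ∉ T.Desc s := by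
  intro h
  exact hs.2 (desc_antisymm (child_mem_desc hs.1) h)

lemma desc_child_subset {v s : V} (hs : s ∈ T.children v) : T.Desc s ⊆ T.Desc v :=
  fun _ h => desc_trans h (child_mem_desc hs.1)

lemma desc_disjoint_aux {v s t u : V} (hs : s ∈ T.children v) (ht : t ∈ T.children v)
    (hst : s ≠ t) (h1 : u ∈ T.Desc s) (h2 : u ∈ T.Desc t) : False := by
  have hcomp := desc_comparable h1 h2
  rcases hcomp with h | h
  · rcases eq_or_ne s t with h' | h'
    · exact hst h'
    · have : T.parent s ∈ T.Desc t := parent_mem_desc h h'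
      rw [hs.1] at this
      exact not_mem_desc_child ht this
  · rcases eq_or_ne t s with h' | h'
    · exact hst h'.symm
    · have : T.parent t ∈ T.Desc s := parent_mem_desc h h'
      rw [ht.1] at this
      exact not_mem_desc_child hs this

lemma children_eq [Fintype V] {v s t : V} (hbin : T.IsBinary) (hs : s ∈ T.children v)
    (ht : t ∈ T.children v) (hst : s ≠ t) : T.children v = {s, t} := by
  have h1 : ({s, t} : Set V) ⊆ T.children v := by
    intro x hx
    rcases hx with rfl | rfl
    · exact hs
    · exact ht
  have h2 : ({s, t} : Set V).ncard = 2 := Set.ncard_pair hst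
  exact (Set.eq_of_subset_of_ncard_le h1 (by rw [h2]; exact hbin v) (Set.toFinite _)).symm

/-- The set whose supremum is `g`. -/
def Gset (T : ParentTree V) {k : ℕ} (c : V → Fin k) (a : Fin k) (v : V) : Set ℕ :=
  {m | ∃ S r, S ⊆ T.Desc v ∧ T.IsNicelySubtree c a S r ∧
    m = {u ∈ S | c u = a}.ncard}

lemma g_def {k : ℕ} (c : V → Fin k) (a : Fin k) (v : V) :
    T.g c a v = sSup (T.Gset c a v) := rfl

lemma bddAbove_Gset [Fintype V] {k : ℕ} (c : V → Fin k) (a : Fin k) (v : V) :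
    BddAbove (T.Gset c a v) := by
  refine ⟨Fintype.card V, ?_⟩
  rintro m ⟨S, r, -, -, rfl⟩
  calc {u ∈ S | c u = a}.ncard ≤ (Set.univ : Set V).ncard :=
        Set.ncard_le_ncard (Set.subset_univ _) (Set.toFinite _)
    _ = Fintype.card V := by rw [Set.ncard_univ, Nat.card_eq_fintype_card]

lemma le_g_of_mem [Fintype V] {k : ℕ} {c : V → Fin k} {a : Fin k} {v : V} {m : ℕ}
    (h : m ∈ T.Gset c a v) : m ≤ T.g c a v :=
  le_csSup (bddAbove_Gset c a v) h

lemma g_mono [Fintype V] {k : ℕ} {c : V → Fin k} {a : Fin k} {u v : V}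
    (h : u ∈ T.Desc v) : T.g c a u ≤ T.g c a v := by
  have hsub : T.Gset c a u ⊆ T.Gset c a v := by
    rintro m ⟨S, r, hS, hn, rfl⟩
    exact ⟨S, r, fun z hz => desc_trans (hS hz) h, hn, rfl⟩
  rcases Set.eq_empty_or_nonempty (T.Gset c a u) with he | hne
  · rw [g_def, he, csSup_empty]
    exact Nat.zero_le _
  · exact csSup_le_csSup (bddAbove_Gset c a v) hne hsub

lemma one_mem_Gset {k : ℕ} {c : V → Fin k} (v : V) : (1 : ℕ) ∈ T.Gset c (c v) v := by
  refine ⟨{v}, v, by simpa using desc_refl v, ⟨⟨rfl, ?_⟩, rfl, ?_⟩, ?_⟩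
  · intro u hu hne
    exact absurd hu hne
  · intro u hu
    have hu' : u ∈ ({v} : Set V) := by
      rcases hu with h | h
      · exact h.1
      · exact h.1
    rw [hu']
  · have : {u ∈ ({v} : Set V) | c u = c v} = {v} := by
      ext u
      simp (config := { contextual := true }) [Set.mem_singleton_iff]
    rw [this, Set.ncard_singleton]


lemma count_le_g [Fintype V] {k : ℕ} {c : V → Fin k} {a : Fin k} :
    ∀ (n : ℕ) (S : Set V) (x : V), S.ncard ≤ n → S ⊆ T.Desc x →
      T.IsSubtreeWithTop S x →
      (∀ u, (T.SLeaf S u ∨ T.SBranched S u) → c u = a) →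
      {u ∈ S | c u = a}.ncard ≤ T.g c a x := by
  intro n
  induction n with
  | zero =>
    intro S x hcard hsub hS hnice
    exfalso
    have hS0 : S = ∅ := by
      have : S.ncard = 0 := Nat.le_zero.mp hcard
      exact (Set.ncard_eq_zero (Set.toFinite S)).mp this
    rw [hS0] at hS
    exact hS.1
  | succ n ih =>
    intro S x hcard hsub hS hnice
    by_cases hcx : c x = a
    · exact le_g_of_mem ⟨S, x, hsub, ⟨hS, hcx, hnice⟩, rfl⟩
    · have hxleaf : ¬ T.SLeaf S x := fun h => hcx (hnice x (Or.inl h))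
      have hxbr : ¬ T.SBranched S x := fun h => hcx (hnice x (Or.inr h))
      obtain ⟨u, hu, hpu, hune⟩ : ∃ u, u ∈ S ∧ T.parent u = x ∧ u ≠ x := by
        by_contra hcon
        push_neg at hcon
        exact hxleaf ⟨hS.1, hcon⟩
      have huniq : ∀ w, w ∈ S → T.parent w = x → w ≠ x → w = u := by
        intro w hw hpw hwx
        by_contra hne
        exact hxbr ⟨hS.1, w, hw, u, hu, hne, hwx, hune, hpw, hpu⟩
      have hudesc : u ∈ T.Desc x := child_mem_desc hpu
      have hxnotdesc : x ∉ T.Desc u := fun h => hune (desc_antisymm h hudesc).symm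
      set S' : Set V := S \ {x} with hS'def
      have hS'sub : S' ⊆ T.Desc u := by
        rintro z ⟨hz, hzx⟩
        simp only [Set.mem_singleton_iff] at hzx
        obtain ⟨w, hwS, hpw, hwx, hzw⟩ := exists_child_in_subtree hS hz hzx
        rw [huniq w hwS hpw hwx] at hzw
        exact hzw
      have huS' : u ∈ S' := ⟨hu, by simpa using hune⟩
      have hS'top : T.IsSubtreeWithTop S' u := by
        refine ⟨huS', ?_⟩
        rintro z ⟨hz, hzx⟩ hzu
        simp only [Set.mem_singleton_iff] at hzx
        have h1 := hS.2 z hz hzx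
        refine ⟨⟨h1.1, ?_⟩, h1.2⟩
        simp only [Set.mem_singleton_iff]
        intro hpz
        exact hxnotdesc (hpz ▸ parent_mem_desc (hS'sub ⟨hz, by simpa using hzx⟩) hzu)
      have htrans : ∀ z, (T.SLeaf S' z ∨ T.SBranched S' z) → c z = a := by
        rintro z (hz | hz)
        · refine hnice z (Or.inl ⟨hz.1.1, ?_⟩)
          intro w hw hpw
          rcases eq_or_ne w x with rfl | hwx
          · exfalso
            have hzS' : z ∈ S' := hz.1
            have : w ∈ T.Desc z := child_mem_desc hpw
            exact hxnotdesc (desc_trans this (hS'sub hzS'))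
          · exact hz.2 w ⟨hw, by simpa using hwx⟩ hpw
        · obtain ⟨hzS', w1, hw1, w2, hw2, h12, h1z, h2z, hp1, hp2⟩ := hz
          exact hnice z (Or.inr ⟨hzS'.1, w1, hw1.1, w2, hw2.1, h12, h1z, h2z, hp1, hp2⟩)
      have hcount : {w ∈ S | c w = a} = {w ∈ S' | c w = a} := by
        ext w
        simp only [Set.mem_setOf_eq, Set.mem_sep_iff, hS'def, Set.mem_diff,
          Set.mem_singleton_iff]
        constructor
        · rintro ⟨hwS, hwc⟩
          refine ⟨⟨hwS, ?_⟩, hwc⟩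
          rintro rfl
          exact hcx hwc
        · rintro ⟨⟨hwS, -⟩, hwc⟩
          exact ⟨hwS, hwc⟩
      have hcard' : S'.ncard ≤ n := by
        have h1 : S'.ncard = S.ncard - 1 := Set.ncard_diff_singleton_of_mem hS.1
        have h2 : 0 < S.ncard := (Set.ncard_pos (Set.toFinite S)).mpr ⟨x, hS.1⟩
        omega
      calc {w ∈ S | c w = a}.ncard = {w ∈ S' | c w = a}.ncard := by rw [hcount]
        _ ≤ T.g c a u := ih S' u hcard' hS'sub hS'top htrans
        _ ≤ T.g c a x := g_mono hudesc


/-- `S₁` together with the ancestors (up to the child `x`) needed to connect it. -/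
def Pset (T : ParentTree V) (x : V) (S₁ : Set V) : Set V :=
  {u | u ∈ T.Desc x ∧ ∃ w ∈ S₁, w ∈ T.Desc u}

lemma subset_pset {x : V} {S₁ : Set V} (h : S₁ ⊆ T.Desc x) : S₁ ⊆ T.Pset x S₁ :=
  fun w hw => ⟨h hw, w, hw, desc_refl w⟩

lemma pset_classify {x r₁ : V} {S₁ : Set V} (htop : T.IsSubtreeWithTop S₁ r₁)
    {u : V} (hu : u ∈ T.Pset x S₁) (hu1 : u ∉ S₁) : r₁ ∈ T.Desc u ∧ u ≠ r₁ := by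
  obtain ⟨hux, z, hz, hzu⟩ := hu
  have hzr : z ∈ T.Desc r₁ := subtree_subset_desc htop z hz
  rcases desc_comparable hzu hzr with h | h
  · exfalso
    apply hu1
    obtain ⟨j, hj⟩ := hzu
    obtain ⟨i, hi⟩ := h
    have hK : T.parent^[i + j] z = r₁ := by
      rw [Function.iterate_add_apply, hj, hi]
    have := chain_mem htop hz hK j (by omega)
    rw [hj] at this
    exact this
  · exact ⟨h, fun he => hu1 (he ▸ htop.1)⟩

lemma pset_child_mem {x r₁ : V} {S₁ : Set V} (htop : T.IsSubtreeWithTop S₁ r₁)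
    {u w : V} (hu : u ∈ S₁) (hw : w ∈ T.Pset x S₁) (hpw : T.parent w = u) : w ∈ S₁ := by
  obtain ⟨hwx, z, hz, hzw⟩ := hw
  obtain ⟨p, hp⟩ := hzw
  obtain ⟨i, hi⟩ := subtree_subset_desc htop u hu
  have hp1 : T.parent^[p + 1] z = u := by
    rw [Function.iterate_succ_apply', hp, hpw]
  have hK : T.parent^[i + (p + 1)] z = r₁ := by
    rw [Function.iterate_add_apply, hp1, hi]
  have := chain_mem htop hz hK p (by omega)
  rw [hp] at this
  exact this

lemma nice_on_side {k : ℕ} {c : V → Fin k} {a : Fin k} {v x y : V}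
    (hx : x ∈ T.children v) (hy : y ∈ T.children v) (hxy : x ≠ y)
    {S₁ S₂ : Set V} (h₁sub : S₁ ⊆ T.Desc x)
    (h₁ : S₁ = ∅ ∨ ∃ r, T.IsNicelySubtree c a S₁ r)
    {S : Set V} (hSmem : ∀ w, w ∈ S ↔ w = v ∨ w ∈ T.Pset x S₁ ∨ w ∈ T.Pset y S₂)
    (h₂sub : S₂ ⊆ T.Desc y) :
    ∀ u, u ∈ T.Pset x S₁ → (T.SLeaf S u ∨ T.SBranched S u) → c u = a := by
  intro u hu hlb
  have hux : u ∈ T.Desc x := hu.1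
  have hS₁ne : S₁ ≠ ∅ := by
    obtain ⟨-, z, hz, -⟩ := hu
    exact fun he => by rw [he] at hz; exact hz
  obtain ⟨r₁, hn₁⟩ := h₁.resolve_left hS₁ne
  have htop := hn₁.1
  have hvne : u ≠ v := by
    rintro rfl
    exact not_mem_desc_child hx hux
  -- children of u in S lie in `Pset x S₁`
  have hchild : ∀ w, w ∈ S → T.parent w = u → w ≠ u → w ∈ T.Pset x S₁ := by
    intro w hw hpw hwu
    rcases (hSmem w).mp hw with hwv | hw1 | hw2
    · exfalso
      subst hwv
      have h1 : u ∈ T.Desc w := desc_child_subset hx hux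
      have h2 : w ∈ T.Desc u := child_mem_desc hpw
      exact hvne (desc_antisymm h1 h2)
    · exact hw1
    · exfalso
      rcases eq_or_ne w y with rfl | hwy
      · have : u = v := by rw [← hpw, hy.1]
        exact hvne this
      · have : T.parent w ∈ T.Desc y := parent_mem_desc hw2.1 hwy
        rw [hpw] at this
        exact desc_disjoint_aux hx hy hxy hux this
  by_cases huS₁ : u ∈ S₁
  · -- `u` is a vertex of `S₁`; leaves/branched of `S` at `u` are leaves/branched of `S₁`
    have hS₁S : S₁ ⊆ S := fun w hw => (hSmem w).mpr (Or.inr (Or.inl (subset_pset h₁sub hw)))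
    rcases hlb with hleaf | hbr
    · refine hn₁.2.2 u (Or.inl ⟨huS₁, ?_⟩)
      intro w hw hpw
      exact hleaf.2 w (hS₁S hw) hpw
    · obtain ⟨-, w1, hw1, w2, hw2, h12, h1u, h2u, hp1, hp2⟩ := hbr
      have hw1' : w1 ∈ S₁ := pset_child_mem htop huS₁ (hchild w1 hw1 hp1 h1u) hp1
      have hw2' : w2 ∈ S₁ := pset_child_mem htop huS₁ (hchild w2 hw2 hp2 h2u) hp2
      exact hn₁.2.2 u (Or.inr ⟨huS₁, w1, hw1', w2, hw2', h12, h1u, h2u, hp1, hp2⟩)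
  · -- `u` is strictly above `r₁`: it is neither a leaf nor branched in `S`
    exfalso
    obtain ⟨hr₁u, hur₁⟩ := pset_classify htop hu huS₁
    -- `r₁ ∈ Desc` of every `S`-child of `u`
    have hkey : ∀ w, w ∈ S → T.parent w = u → w ≠ u → r₁ ∈ T.Desc w := by
      intro w hw hpw hwu
      have hwP := hchild w hw hpw hwu
      by_cases hwS₁ : w ∈ S₁
      · rcases eq_or_ne w r₁ with rfl | hwr
        · exact desc_refl w
        · exfalso
          have h1 : w ∈ T.Desc r₁ := subtree_subset_desc htop w hwS₁
          have h2 : T.parent w ∈ T.Desc r₁ := parent_mem_desc h1 hwr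
          rw [hpw] at h2
          exact hur₁ (desc_antisymm h2 hr₁u)
      · exact (pset_classify htop hwP hwS₁).1
    rcases hlb with hleaf | hbr
    · obtain ⟨w, hpw, hwu, hr₁w⟩ := exists_child_of_desc hr₁u (Ne.symm hur₁)
      have hwS : w ∈ S := (hSmem w).mpr (Or.inr (Or.inl
        ⟨mem_desc_of_parent_mem hpw hux, r₁, htop.1, hr₁w⟩))
      exact hwu (hleaf.2 w hwS hpw)
    · obtain ⟨-, w1, hw1, w2, hw2, h12, h1u, h2u, hp1, hp2⟩ := hbr
      obtain ⟨p1, hq1⟩ := hkey w1 hw1 hp1 h1u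
      obtain ⟨p2, hq2⟩ := hkey w2 hw2 hp2 h2u
      have hu1 : T.parent^[p1 + 1] r₁ = u := by
        rw [Function.iterate_succ_apply', hq1, hp1]
      have hu2 : T.parent^[p2 + 1] r₁ = u := by
        rw [Function.iterate_succ_apply', hq2, hp2]
      have hne : p1 ≠ p2 := by
        rintro rfl
        exact h12 (hq1 ▸ hq2 ▸ rfl)
      have hperiodic : ∀ p q : ℕ, p < q → T.parent^[p + 1] r₁ = u →
          T.parent^[q + 1] r₁ = u → False := by
        intro p q hpq hp' hq'
        have hd : T.parent^[q - p] u = u := by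
          have hsum : q - p + (p + 1) = q + 1 := by omega
          calc T.parent^[q - p] u = T.parent^[q - p] (T.parent^[p + 1] r₁) := by rw [hp']
            _ = T.parent^[q - p + (p + 1)] r₁ := (Function.iterate_add_apply _ _ _ _).symm
            _ = u := by rw [hsum, hq']
        have := eq_root_of_periodic (by omega) hd
        exact ne_root_of_mem_desc_child hx hux this
      rcases lt_or_gt_of_ne hne with h | h
      · exact hperiodic p1 p2 h hu1 hu2
      · exact hperiodic p2 p1 h hu2 hu1

lemma combine_le_g [Fintype V] {k : ℕ} {c : V → Fin k} {a : Fin k} {v s t : V}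
    (ha : c v = a)
    (hs : s ∈ T.children v) (ht : t ∈ T.children v) (hst : s ≠ t)
    {S₁ S₂ : Set V} (h₁sub : S₁ ⊆ T.Desc s) (h₂sub : S₂ ⊆ T.Desc t)
    (h₁ : S₁ = ∅ ∨ ∃ r, T.IsNicelySubtree c a S₁ r)
    (h₂ : S₂ = ∅ ∨ ∃ r, T.IsNicelySubtree c a S₂ r) :
    {u ∈ S₁ | c u = a}.ncard + {u ∈ S₂ | c u = a}.ncard + 1 ≤ T.g c a v := by
  classical
  set S : Set V := insert v (T.Pset s S₁ ∪ T.Pset t S₂) with hSdef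
  have hSmem : ∀ w, w ∈ S ↔ w = v ∨ w ∈ T.Pset s S₁ ∨ w ∈ T.Pset t S₂ := by
    intro w
    simp [hSdef, Set.mem_insert_iff, Set.mem_union]
  have hSmem' : ∀ w, w ∈ S ↔ w = v ∨ w ∈ T.Pset t S₂ ∨ w ∈ T.Pset s S₁ := by
    intro w
    rw [hSmem]
    tauto
  have hSsub : S ⊆ T.Desc v := by
    intro w hw
    rcases (hSmem w).mp hw with hwv | h | h
    · rw [hwv]
      exact desc_refl v
    · exact desc_child_subset hs h.1
    · exact desc_child_subset ht h.1
  have hStop : T.IsSubtreeWithTop S v := by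
    refine ⟨(hSmem v).mpr (Or.inl rfl), ?_⟩
    intro w hw hwv
    rcases (hSmem w).mp hw with rfl | h | h
    · exact absurd rfl hwv
    · refine ⟨?_, ne_root_of_mem_desc_child hs h.1⟩
      rcases eq_or_ne w s with rfl | hws
      · rw [hs.1]
        exact (hSmem v).mpr (Or.inl rfl)
      · apply (hSmem _).mpr
        right; left
        obtain ⟨hwd, z, hz, hzw⟩ := h
        exact ⟨parent_mem_desc hwd hws, z, hz, desc_trans hzw (child_mem_desc rfl)⟩
    · refine ⟨?_, ne_root_of_mem_desc_child ht h.1⟩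
      rcases eq_or_ne w t with rfl | hwt
      · rw [ht.1]
        exact (hSmem v).mpr (Or.inl rfl)
      · apply (hSmem _).mpr
        right; right
        obtain ⟨hwd, z, hz, hzw⟩ := h
        exact ⟨parent_mem_desc hwd hwt, z, hz, desc_trans hzw (child_mem_desc rfl)⟩
  have hnice : ∀ u, (T.SLeaf S u ∨ T.SBranched S u) → c u = a := by
    intro u hlb
    have huS : u ∈ S := by
      rcases hlb with h | h
      · exact h.1
      · exact h.1
    rcases (hSmem u).mp huS with rfl | h | h
    · exact ha
    · exact nice_on_side hs ht hst h₁sub h₁ hSmem h₂sub u h hlb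
    · exact nice_on_side ht hs hst.symm h₂sub h₂ hSmem' h₁sub u h hlb
  have hmem : {u ∈ S | c u = a}.ncard ∈ T.Gset c a v :=
    ⟨S, v, hSsub, ⟨hStop, ha, hnice⟩, rfl⟩
  have hsubsets : insert v ({u ∈ S₁ | c u = a} ∪ {u ∈ S₂ | c u = a}) ⊆ {u ∈ S | c u = a} := by
    intro w hw
    rcases hw with rfl | hw
    · exact ⟨(hSmem w).mpr (Or.inl rfl), ha⟩
    · rcases hw with ⟨hw1, hwc⟩ | ⟨hw2, hwc⟩
      · exact ⟨(hSmem w).mpr (Or.inr (Or.inl (subset_pset h₁sub hw1))), hwc⟩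
      · exact ⟨(hSmem w).mpr (Or.inr (Or.inr (subset_pset h₂sub hw2))), hwc⟩
  have hvnot : v ∉ {u ∈ S₁ | c u = a} ∪ {u ∈ S₂ | c u = a} := by
    rintro (⟨h', -⟩ | ⟨h', -⟩)
    · exact not_mem_desc_child hs (h₁sub h')
    · exact not_mem_desc_child ht (h₂sub h')
  have hdisj : Disjoint {u ∈ S₁ | c u = a} {u ∈ S₂ | c u = a} := by
    rw [Set.disjoint_left]
    rintro w ⟨hw1, -⟩ ⟨hw2, -⟩
    exact desc_disjoint_aux hs ht hst (h₁sub hw1) (h₂sub hw2)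
  have hcard : (insert v ({u ∈ S₁ | c u = a} ∪ {u ∈ S₂ | c u = a})).ncard =
      {u ∈ S₁ | c u = a}.ncard + {u ∈ S₂ | c u = a}.ncard + 1 := by
    rw [Set.ncard_insert_of_notMem hvnot (Set.toFinite _),
      Set.ncard_union_eq hdisj (Set.toFinite _) (Set.toFinite _)]
  calc {u ∈ S₁ | c u = a}.ncard + {u ∈ S₂ | c u = a}.ncard + 1
      = (insert v ({u ∈ S₁ | c u = a} ∪ {u ∈ S₂ | c u = a})).ncard := hcard.symm
    _ ≤ {u ∈ S | c u = a}.ncard := Set.ncard_le_ncard hsubsets (Set.toFinite _)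
    _ ≤ T.g c a v := le_g_of_mem hmem

end ParentTree

open ParentTree

/-- In a properly coloured rooted binary tree `T`, if `v` has sons `s` and `t` and
`c v` is the colour of `v`, then `g_{c v}(T_v) = g_{c v}(T_s) + g_{c v}(T_t) + 1`. -/
theorem g_eq_sons_add_one {V : Type} [Fintype V] (T : ParentTree V)
    (hbin : T.IsBinary) {k : ℕ} (c : V → Fin k)
    (hc : IsParityColoring T.graph c)
    (v s t : V) (hs : s ∈ T.children v) (ht : t ∈ T.children v) (hst : s ≠ t) :
    T.g c (c v) v = T.g c (c v) s + T.g c (c v) t + 1 := by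
  classical
  -- the lower bound, by combining optimal subtrees below `s` and `t`
  have side : ∀ x : V, x ∈ T.children v → ∃ S₁ : Set V, S₁ ⊆ T.Desc x ∧
      (S₁ = ∅ ∨ ∃ r, T.IsNicelySubtree c (c v) S₁ r) ∧
      T.g c (c v) x = {u ∈ S₁ | c u = (c v)}.ncard := by
    intro x hx
    rcases Set.eq_empty_or_nonempty (T.Gset c (c v) x) with he | hne
    · refine ⟨∅, by simp, Or.inl rfl, ?_⟩
      rw [g_def, he, csSup_empty]
      simp
    · have hmem := Nat.sSup_mem hne (bddAbove_Gset c (c v) x)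
      obtain ⟨S₁, r₁, hsub, hn, hcount⟩ := hmem
      exact ⟨S₁, hsub, Or.inr ⟨r₁, hn⟩, hcount⟩
  obtain ⟨S₁, h₁sub, h₁, hgs⟩ := side s hs
  obtain ⟨S₂, h₂sub, h₂, hgt⟩ := side t ht
  have hge : T.g c (c v) s + T.g c (c v) t + 1 ≤ T.g c (c v) v := by
    rw [hgs, hgt]
    exact combine_le_g rfl hs ht hst h₁sub h₂sub h₁ h₂
  -- the upper bound
  have hnev : (T.Gset c (c v) v).Nonempty := ⟨1, one_mem_Gset v⟩
  have hgv := Nat.sSup_mem hnev (bddAbove_Gset c (c v) v)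
  obtain ⟨S, r, hsub, hn, hcount⟩ := hgv
  have hcount : T.g c (c v) v = {u ∈ S | c u = (c v)}.ncard := hcount
  have hle : T.g c (c v) v ≤ T.g c (c v) s + T.g c (c v) t + 1 := by
    by_cases hvS : v ∈ S
    · -- `v` is the top of the optimal subtree; split it below `s` and `t`
      have hrv : v = r :=
        desc_antisymm (subtree_subset_desc hn.1 v hvS) (hsub hn.1.1)
      subst hrv
      have hdec : ∀ u ∈ S, u = v ∨ u ∈ S ∩ T.Desc s ∨ u ∈ S ∩ T.Desc t := by
        intro u hu
        rcases eq_or_ne u v with rfl | huv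
        · exact Or.inl rfl
        · right
          obtain ⟨w, hpw, hwv, huw⟩ := exists_child_of_desc (hsub hu) huv
          have hw : w ∈ T.children v := ⟨hpw, hwv⟩
          rw [children_eq hbin hs ht hst] at hw
          simp only [Set.mem_insert_iff, Set.mem_singleton_iff] at hw
          rcases hw with rfl | rfl
          · exact Or.inl ⟨hu, huw⟩
          · exact Or.inr ⟨hu, huw⟩
      have hsplit : {u ∈ S | c u = (c v)} =
          insert v ({u ∈ S ∩ T.Desc s | c u = (c v)} ∪ {u ∈ S ∩ T.Desc t | c u = (c v)}) := by
        ext u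
        simp only [Set.mem_sep_iff, Set.mem_insert_iff, Set.mem_union, Set.mem_inter_iff]
        constructor
        · rintro ⟨huS, huc⟩
          rcases hdec u huS with rfl | h | h
          · exact Or.inl rfl
          · exact Or.inr (Or.inl ⟨h, huc⟩)
          · exact Or.inr (Or.inr ⟨h, huc⟩)
        · rintro (rfl | ⟨⟨h, -⟩, hc'⟩ | ⟨⟨h, -⟩, hc'⟩)
          · exact ⟨hvS, rfl⟩
          · exact ⟨h, hc'⟩
          · exact ⟨h, hc'⟩
      have hvnot : v ∉ {u ∈ S ∩ T.Desc s | c u = (c v)} ∪ {u ∈ S ∩ T.Desc t | c u = (c v)} := by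
        rintro (⟨⟨-, h'⟩, -⟩ | ⟨⟨-, h'⟩, -⟩)
        · exact not_mem_desc_child hs h'
        · exact not_mem_desc_child ht h'
      have hdisj : Disjoint {u ∈ S ∩ T.Desc s | c u = (c v)} {u ∈ S ∩ T.Desc t | c u = (c v)} := by
        rw [Set.disjoint_left]
        rintro w ⟨⟨-, hw1⟩, -⟩ ⟨⟨-, hw2⟩, -⟩
        exact desc_disjoint_aux hs ht hst hw1 hw2
      have hside : ∀ x, x ∈ T.children v →
          {u ∈ S ∩ T.Desc x | c u = (c v)}.ncard ≤ T.g c (c v) x := by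
        intro x hx
        rcases Set.eq_empty_or_nonempty (S ∩ T.Desc x) with he | ⟨u₀, hu₀S, hu₀d⟩
        · rw [show {u ∈ S ∩ T.Desc x | c u = (c v)} = ∅ by rw [he]; simp]
          simp
        · obtain ⟨m, hm⟩ := hu₀d
          have hK : T.parent^[m + 1] u₀ = v := by
            rw [Function.iterate_succ_apply', hm, hx.1]
          have hxS : x ∈ S := by
            have := chain_mem hn.1 hu₀S hK m (by omega)
            rw [hm] at this
            exact this
          have htopx : T.IsSubtreeWithTop (S ∩ T.Desc x) x := by
            refine ⟨⟨hxS, desc_refl x⟩, ?_⟩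
            rintro z ⟨hzS, hzd⟩ hzx
            have hzv : z ≠ v := by
              rintro rfl
              exact not_mem_desc_child hx hzd
            have h1 := hn.1.2 z hzS hzv
            exact ⟨⟨h1.1, parent_mem_desc hzd hzx⟩, h1.2⟩
          have htrans : ∀ z, (T.SLeaf (S ∩ T.Desc x) z ∨ T.SBranched (S ∩ T.Desc x) z) →
              c z = (c v) := by
            rintro z (hz | hz)
            · refine hn.2.2 z (Or.inl ⟨hz.1.1, ?_⟩)
              intro w hw hpw
              have hwd : w ∈ T.Desc x := mem_desc_of_parent_mem hpw hz.1.2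
              exact hz.2 w ⟨hw, hwd⟩ hpw
            · obtain ⟨hz1, w1, hw1, w2, hw2, hh⟩ := hz
              exact hn.2.2 z (Or.inr ⟨hz1.1, w1, hw1.1, w2, hw2.1, hh⟩)
          exact count_le_g _ _ x le_rfl (fun z hz => hz.2) htopx htrans
      have h1 := hside s hs
      have h2 := hside t ht
      have hcard : {u ∈ S | c u = (c v)}.ncard =
          {u ∈ S ∩ T.Desc s | c u = (c v)}.ncard + {u ∈ S ∩ T.Desc t | c u = (c v)}.ncard + 1 := by
        rw [hsplit, Set.ncard_insert_of_notMem hvnot (Set.toFinite _),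
          Set.ncard_union_eq hdisj (Set.toFinite _) (Set.toFinite _)]
      rw [hcount, hcard]
      omega
    · -- the optimal subtree lives below `s` or below `t`
      have hrv : r ≠ v := fun h => hvS (h ▸ hn.1.1)
      obtain ⟨w, hpw, hwv, hrw⟩ := exists_child_of_desc (hsub hn.1.1) hrv
      have hw : w ∈ T.children v := ⟨hpw, hwv⟩
      have hSsubw : S ⊆ T.Desc w := fun z hz =>
        desc_trans (subtree_subset_desc hn.1 z hz) hrw
      have hgw : T.g c (c v) v ≤ T.g c (c v) w := by
        rw [hcount]
        exact le_g_of_mem ⟨S, r, hSsubw, hn, rfl⟩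
      rw [children_eq hbin hs ht hst] at hw
      simp only [Set.mem_insert_iff, Set.mem_singleton_iff] at hw
      rcases hw with rfl | rfl
      · omega
      · omega
  omega
end

section
/- Let k, n ≥ 1 and let a₁,...,a_k be non-negative integers with Σᵢ aᵢ = n and Σᵢ (2^{aᵢ} − 1) ≤ 2^k − 1. Then k ≥ √n, and moreover k ≥ √n + (1/4)·log₂ n − 1/2. -/
/-!
By convexity of `x ↦ 2 ^ x`, `∑ 2 ^ aᵢ ≥ k · 2 ^ (n / k)`, so `k (2 ^ (n / k) - 1) ≤ 2 ^ k - 1`.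
If `n ≤ k` both bounds are elementary. Otherwise `k ≥ 2` and `x = n / k ≥ 1`, so
`k · 2 ^ (x - 1) ≤ k (2 ^ x - 1) < 2 ^ k`; taking `log₂` gives `n ≤ k (k + 1 - log₂ k)`.
Since `log₂ k ≥ 1` this yields `n ≤ k²`, and completing the square gives
`√n ≤ k + (1 - log₂ k) / 2 ≤ k + 1/2 - (log₂ n) / 4`.
-/

open Finset Real

theorem card_mul_rpow_mean_le_sum {ι : Type*} [Fintype ι] [Nonempty ι] {b : ℝ} (hb : 0 < b)
    (f : ι → ℝ) : Fintype.card ι * b ^ ((∑ i, f i) / Fintype.card ι) ≤ ∑ i, b ^ f i := by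
  have hc : (0 : ℝ) < Fintype.card ι := by exact_mod_cast Fintype.card_pos
  have h := (convexOn_rpow_left hb).map_sum_le (t := univ) (w := fun _ => (Fintype.card ι : ℝ)⁻¹)
    (p := f) (fun _ _ => by positivity) (by simp [hc.ne']) (fun _ _ => Set.mem_univ _)
  simp only [smul_eq_mul, ← mul_sum] at h
  rw [div_eq_inv_mul]
  calc _ ≤ (Fintype.card ι : ℝ) * ((Fintype.card ι : ℝ)⁻¹ * ∑ i, b ^ f i) := by gcongr
    _ = _ := by field_simp

theorem card_mul_two_rpow_mean_sub_one_le {ι : Type*} [Fintype ι] [Nonempty ι] (a : ι → ℕ)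
    {M : ℕ} (hM : ∑ i, (2 ^ a i - 1) ≤ M) :
    Fintype.card ι * ((2 : ℝ) ^ ((∑ i, (a i : ℝ)) / Fintype.card ι) - 1) ≤ M := by
  have hcast : ((∑ i, (2 ^ a i - 1) : ℕ) : ℝ) = ∑ i, (2 : ℝ) ^ (a i : ℝ) - Fintype.card ι := by
    push_cast [Nat.one_le_two_pow, rpow_natCast]
    simp
  have hjensen := card_mul_rpow_mean_le_sum two_pos (fun i => (a i : ℝ))
  have hM' : ((∑ i, (2 ^ a i - 1) : ℕ) : ℝ) ≤ M := by exact_mod_cast hM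
  rw [hcast] at hM'
  rw [mul_sub_one]
  linarith

theorem le_mul_add_one_sub_logb {K N : ℝ} (hK : 0 < K) (hKN : K ≤ N)
    (h : K * (2 ^ (N / K) - 1) ≤ 2 ^ K - 1) : N ≤ K * (K + 1 - logb 2 K) := by
  set x := N / K with hx
  have hx1 : 1 ≤ x := (one_le_div hK).2 hKN
  have hpred : (2 : ℝ) ^ (x - 1) ≤ 2 ^ x - 1 := by
    have : (2 : ℝ) ^ x = 2 ^ (x - 1) * 2 := by
      rw [← rpow_add_one two_ne_zero, sub_add_cancel]
    have : (1 : ℝ) ≤ 2 ^ (x - 1) := one_le_rpow one_le_two (by linarith)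
    linarith
  have hpow : K * 2 ^ (x - 1) ≤ 2 ^ K := by nlinarith
  have hlog : logb 2 K + (x - 1) ≤ K := by
    have := logb_le_logb_of_le one_lt_two (by positivity) hpow
    rwa [logb_mul hK.ne' (by positivity), logb_rpow two_pos one_lt_two.ne',
      logb_rpow two_pos one_lt_two.ne'] at this
  have : N = K * x := by rw [hx, mul_div_cancel₀ _ hK.ne']
  rw [this]
  gcongr
  linarith

theorem sqrt_add_logb_le_of_le_mul_add_one_sub_logb {K N : ℝ} (hK : 2 ≤ K) (hN : 0 < N)
    (h : N ≤ K * (K + 1 - logb 2 K)) :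
    √N ≤ K ∧ √N + 1 / 4 * logb 2 N - 1 / 2 ≤ K := by
  set L := logb 2 K
  have hL : 1 ≤ L := by simpa using logb_le_logb_of_le one_lt_two two_pos hK
  have hLK : L < K + 1 := by nlinarith
  have hNK : N ≤ K ^ 2 := by nlinarith
  have hlogN : logb 2 N ≤ 2 * L := by
    simpa [logb_pow] using logb_le_logb_of_le one_lt_two hN hNK
  have hsqrt : √N ≤ K + (1 - L) / 2 := by
    rw [sqrt_le_left (by linarith)]
    nlinarith
  exact ⟨(sqrt_le_left (by linarith)).2 hNK, by linarith⟩

theorem sqrt_add_logb_le_self {N : ℝ} (hN : 1 ≤ N) : √N + 1 / 4 * logb 2 N - 1 / 2 ≤ N := by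
  set s := √N
  have hs : 1 ≤ s := one_le_sqrt.2 hN
  have hsq : s ^ 2 = N := sq_sqrt (by linarith)
  have hlogs : 0 ≤ log s ∧ log s ≤ s - 1 := ⟨log_nonneg hs, log_le_sub_one_of_pos (by linarith)⟩
  have hlog2 : 1 / 2 < log 2 := by linarith [log_two_gt_d9]
  have hlogN : logb 2 N ≤ 4 * (s - 1) := by
    rw [← hsq, logb, log_pow, div_le_iff₀ (by linarith)]
    push_cast
    nlinarith
  nlinarith

theorem two_le_of_lt_of_sum_two_pow_sub_one_le {k n : ℕ} (a : Fin k → ℕ) (hsum : ∑ i, a i = n)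
    (hle : ∑ i, (2 ^ a i - 1) ≤ 2 ^ k - 1) (hkn : k < n) : 2 ≤ k := by
  obtain _ | _ | k := k
  · rw [Fin.sum_univ_zero] at hsum; omega
  · rw [Fin.sum_univ_one] at hsum hle
    subst hsum
    have : 2 ^ a 0 ≤ 2 ^ 1 := by omega
    have := (Nat.pow_le_pow_iff_right one_lt_two).1 this
    omega
  · omega

theorem k_lower_bound_general (k n : ℕ) (hn : 1 ≤ n) (a : Fin k → ℕ)
    (hsum : ∑ i, a i = n) (hle : ∑ i, (2 ^ a i - 1) ≤ 2 ^ k - 1) :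
    Real.sqrt n ≤ (k : ℝ) ∧
      Real.sqrt n + (1 / 4) * Real.logb 2 n - 1 / 2 ≤ (k : ℝ) := by
  rcases le_or_gt n k with hnk | hkn
  · have hN : (1 : ℝ) ≤ n := by exact_mod_cast hn
    have hNK : (n : ℝ) ≤ k := by exact_mod_cast hnk
    exact ⟨(sqrt_le_self_iff.2 (Or.inr hN)).trans hNK, (sqrt_add_logb_le_self hN).trans hNK⟩
  · have hk : 2 ≤ k := two_le_of_lt_of_sum_two_pow_sub_one_le a hsum hle hkn
    have hK : (2 : ℝ) ≤ k := by exact_mod_cast hk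
    have : Nonempty (Fin k) := ⟨⟨0, by omega⟩⟩
    have hmean := card_mul_two_rpow_mean_sub_one_le a hle
    rw [Fintype.card_fin, ← Nat.cast_sum, hsum, Nat.cast_pred (Nat.two_pow_pos k), Nat.cast_pow,
      ← rpow_natCast] at hmean
    refine sqrt_add_logb_le_of_le_mul_add_one_sub_logb hK (by positivity) ?_
    exact le_mul_add_one_sub_logb (by positivity) (by exact_mod_cast hkn.le) (by simpa using hmean)

/-- Let `k, n ≥ 1` and `a₁,…,a_k` be non-negative integers with `Σ aᵢ = n` and
`Σ (2^{aᵢ} − 1) ≤ 2^k − 1`. Then `k ≥ √n` and moreover `k ≥ √n + (1/4)·log₂ n − 1/2`. -/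
theorem k_lower_bound (k n : ℕ) (hk : 1 ≤ k) (hn : 1 ≤ n) (a : Fin k → ℕ)
    (hsum : ∑ i, a i = n) (hle : ∑ i, (2 ^ a i - 1) ≤ 2 ^ k - 1) :
    Real.sqrt n ≤ (k : ℝ) ∧
      Real.sqrt n + (1 / 4) * Real.logb 2 n - 1 / 2 ≤ (k : ℝ) :=
  k_lower_bound_general k n hn a hsum hle
end

section
/- Let k ≥ 1 and n ≥ 1 be integers (viewed as reals) with k·(2^{n/k} − 1) ≤ 2^k − 1. Then k ≥ √n. -/
theorem Real.le_of_mul_rpow_sub_one_le {b c x y : ℝ} (hb : 1 < b) (hc : 1 ≤ c) (hx : 0 ≤ x)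
    (h : c * (b ^ x - 1) ≤ b ^ y - 1) : x ≤ y := by
  have hbx : 0 ≤ b ^ x - 1 := sub_nonneg.mpr (Real.one_le_rpow hb.le hx)
  have : b ^ x - 1 ≤ b ^ y - 1 := (le_mul_of_one_le_left hbx hc).trans h
  exact (Real.rpow_le_rpow_left_iff hb).mp (by linarith)

theorem sqrt_le_of_ineq_general (k n : ℕ) (hk : 1 ≤ k)
    (h : (k : ℝ) * ((2 : ℝ) ^ ((n : ℝ) / (k : ℝ)) - 1) ≤ (2 : ℝ) ^ (k : ℝ) - 1) :
    Real.sqrt n ≤ (k : ℝ) := by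
  have hk' : (1 : ℝ) ≤ k := by exact_mod_cast hk
  have hdiv : (n : ℝ) / k ≤ k :=
    Real.le_of_mul_rpow_sub_one_le one_lt_two hk' (by positivity) h
  rw [div_le_iff₀ (by positivity)] at hdiv
  exact Real.sqrt_le_iff.mpr ⟨by positivity, by linarith⟩

/-- Let `k ≥ 1` and `n ≥ 1` be integers with `k·(2^{n/k} − 1) ≤ 2^k − 1`.
Then `k ≥ √n`. -/
theorem sqrt_le_of_ineq (k n : ℕ) (hk : 1 ≤ k) (hn : 1 ≤ n)
    (h : (k : ℝ) * ((2 : ℝ) ^ ((n : ℝ) / (k : ℝ)) - 1) ≤ (2 : ℝ) ^ (k : ℝ) - 1) :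
    Real.sqrt n ≤ (k : ℝ) :=
  sqrt_le_of_ineq_general k n hk h
end

section
/- Define A(l,d) for integers l ≥ 0, d ≥ 0 by A(l,0) = 0, A(l,d) = 2^l − 1 for d ≥ l, and A(l,d) = A(l−1,d−1) + A(l−1,d) + 1 for l > d > 0. Then for all l > d ≥ 0: A(l,d) = Σ_{i=0}^{d} (2^i − 1)·C(l−i−1, l−d−1) + C(l,d) − 1, where C(·,·) denotes binomial coefficients. -/
/-- The recursively defined function `A`: `A(l,0) = 0`, `A(l,d) = 2^l − 1` for `d ≥ l`,
and `A(l,d) = A(l−1,d−1) + A(l−1,d) + 1` for `l > d > 0`. -/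
def Arec : ℕ → ℕ → ℕ
  | 0, _ => 0
  | _, 0 => 0
  | l + 1, d + 1 =>
    if l + 1 ≤ d + 1 then 2 ^ (l + 1) - 1
    else Arec l d + Arec l (d + 1) + 1

/-!
Write `l = d + k + 1`. With `k` as the second parameter, the explicit sum
`S d k = ∑_{i ≤ d} (2^i - 1) C(d + k - i, k)` obeys Pascal's rule `S (d+1) (k+1) = S d (k+1) + S (d+1) k`,
which is the recursion of `A` shifted by one, and `C(l, d)` does the same. So `A + 1` and `S + C`
satisfy the same recursion; they also agree on the boundary `d = 0` and the near-diagonal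
`l = d + 1`, where both equal `2^l - 1` because `∑_{i ≤ d} (2^i - 1) = 2^(d+1) - d - 2`.
-/

open Finset

theorem Arec_zero_right (l : ℕ) : Arec l 0 = 0 := by
  cases l <;> rfl

theorem Arec_self (n : ℕ) : Arec n n = mersenne n := by
  cases n with
  | zero => rfl
  | succ n => rw [Arec, if_pos le_rfl, mersenne]

theorem Arec_succ_succ_of_lt {l d : ℕ} (h : d < l) :
    Arec (l + 1) (d + 1) = Arec l d + Arec l (d + 1) + 1 := by
  rw [Arec, if_neg (by omega)]

theorem Arec_succ_self_add_two (n : ℕ) : Arec (n + 1) n + 2 = 2 ^ (n + 1) := by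
  induction n with
  | zero => rfl
  | succ n ih =>
    have := succ_mersenne (n + 1)
    rw [Arec_succ_succ_of_lt (Nat.lt_add_one n), Arec_self, pow_succ, ← ih]
    omega

theorem sum_range_mersenne_add (n : ℕ) : ∑ i ∈ range n, mersenne i + n + 1 = 2 ^ n := by
  induction n with
  | zero => rfl
  | succ n ih =>
    have := succ_mersenne n
    rw [sum_range_succ, pow_succ, ← ih]
    omega

def mersenneChooseSum (d k : ℕ) : ℕ :=
  ∑ i ∈ range (d + 1), mersenne i * (d + k - i).choose k

theorem mersenneChooseSum_zero_left (k : ℕ) : mersenneChooseSum 0 k = 0 := by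
  simp [mersenneChooseSum]

theorem mersenneChooseSum_zero_right_add (d : ℕ) :
    mersenneChooseSum d 0 + d + 2 = 2 ^ (d + 1) := by
  simpa [mersenneChooseSum, add_assoc] using sum_range_mersenne_add (d + 1)

theorem mersenneChooseSum_succ_succ (d k : ℕ) :
    mersenneChooseSum (d + 1) (k + 1) = mersenneChooseSum d (k + 1) + mersenneChooseSum (d + 1) k := by
  have pascal : ∀ i ∈ range (d + 2), mersenne i * (d + 1 + (k + 1) - i).choose (k + 1) =
      mersenne i * (d + 1 + k - i).choose (k + 1) + mersenne i * (d + 1 + k - i).choose k := by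
    intro i hi
    rw [show d + 1 + (k + 1) - i = d + 1 + k - i + 1 by grind, Nat.choose_succ_succ']
    ring
  rw [mersenneChooseSum, sum_congr rfl pascal, sum_add_distrib, sum_range_succ, add_tsub_cancel_left,
    Nat.choose_succ_self, mul_zero, add_zero, mersenneChooseSum, mersenneChooseSum]
  congr 1
  refine sum_congr rfl fun i _ => ?_
  rw [show d + 1 + k - i = d + (k + 1) - i by omega]

theorem Arec_add_one (d k : ℕ) :
    Arec (d + k + 1) d + 1 = mersenneChooseSum d k + (d + k + 1).choose d := by
  induction d generalizing k with
  | zero => simp [Arec_zero_right, mersenneChooseSum_zero_left]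
  | succ d ihd =>
    induction k with
    | zero =>
      have hA := Arec_succ_self_add_two (d + 1)
      have hS := mersenneChooseSum_zero_right_add (d + 1)
      rw [add_zero, Nat.choose_succ_self_right]
      omega
    | succ k ihk =>
      have ihd' := ihd (k + 1)
      rw [show d + (k + 1) + 1 = d + k + 2 by omega] at ihd'
      rw [show d + 1 + k + 1 = d + k + 2 by omega] at ihk
      rw [show d + 1 + (k + 1) + 1 = d + k + 2 + 1 by omega, Arec_succ_succ_of_lt (by omega),
        Nat.choose_succ_succ', mersenneChooseSum_succ_succ]
      omega

/-- For all `l > d ≥ 0`: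
`A(l,d) = Σ_{i=0}^{d} (2^i − 1)·C(l−i−1, l−d−1) + C(l,d) − 1`. -/
theorem Arec_explicit (l d : ℕ) (h : d < l) :
    Arec l d =
      (∑ i ∈ Finset.range (d + 1), (2 ^ i - 1) * Nat.choose (l - i - 1) (l - d - 1)) +
        Nat.choose l d - 1 := by
  obtain ⟨k, rfl⟩ : ∃ k, l = d + k + 1 := ⟨l - d - 1, by omega⟩
  have hsum : ∑ i ∈ range (d + 1), (2 ^ i - 1) * (d + k + 1 - i - 1).choose (d + k + 1 - d - 1) =
      mersenneChooseSum d k :=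
    sum_congr rfl fun i _ => by rw [mersenne, show d + k + 1 - i - 1 = d + k - i by omega,
      show d + k + 1 - d - 1 = k by omega]
  rw [hsum, ← Arec_add_one, Nat.add_sub_cancel]
end
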